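/- arXiv:1307.4145 — 7 statements merged into one kernel-verified Lean document; each statement's English description precedes it below -/
import Mathlib

section
/- Let λ > 0 and let θ₁, θ₂ ∈ F_λ with θ₁ ≠ θ₂. Then the strict inequality g(θ₂) − g(θ₁) > ⟨∇g(θ₁), θ₂ − θ₁⟩ + (2/m)‖θ₂ − θ₁‖₂² holds, where ∇g(θ) is the gradient of g, given componentwise by [∇g(θ)]_i = (1/m) log(θ_i/(1 − θ_i)). -/
/-- The dual objective `g(θ) = (1/m) Σ_i [θ_i log θ_i + (1−θ_i) log(1−θ_i)]`. -/
noncomputable def g (m : ℕ) (θ : Fin m → ℝ) : ℝ :=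
  (1 / (m : ℝ)) * ∑ i, (θ i * Real.log (θ i) + (1 - θ i) * Real.log (1 - θ i))

/-- The gradient of `g`, componentwise `(1/m) log(θ_i/(1−θ_i))`. -/
noncomputable def gradg (m : ℕ) (θ : Fin m → ℝ) : Fin m → ℝ :=
  fun i => (1 / (m : ℝ)) * Real.log (θ i / (1 - θ i))
/-- The dual feasible set `F_λ`: componentwise in `(0,1)`, `|⟨θ, x̄^j⟩| ≤ mλ` for all
columns `x̄^j = X j`, and `⟨θ, b⟩ = 0`. -/
def Feas (m p : ℕ) (X : Fin p → Fin m → ℝ) (b : Fin m → ℝ) (lam : ℝ) :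
    Set (Fin m → ℝ) :=
  {θ | (∀ i, 0 < θ i ∧ θ i < 1) ∧ (∀ j, |∑ i, θ i * X j i| ≤ (m : ℝ) * lam) ∧
    ∑ i, θ i * b i = 0}


/-!
Write `g(θ) = -(1/m) Σ_i H(θ_i)` with `H` the binary entropy. Since
`-H''(t) = 1/t + 1/(1-t) = 4 + (1-2t)²/(t(1-t))`, the function `-H(t) - 2t²` is strictly convex
on `(0,1)`; its strict tangent-line inequality at `θ₁ i` is the claimed inequality for one
coordinate. Summing over the coordinates, at least one of which differs, gives the result.
-/

open Real Set

theorem StrictConvexOn.add_mul_sub_lt_of_hasDerivAt {S : Set ℝ} {f : ℝ → ℝ} {x y f' : ℝ}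
    (hf : StrictConvexOn ℝ S f) (hx : x ∈ S) (hy : y ∈ S) (hxy : x ≠ y)
    (hf' : HasDerivAt f f' x) : f x + f' * (y - x) < f y := by
  rcases hxy.lt_or_gt with hlt | hgt
  · have := hf.lt_slope_of_hasDerivAt hx hy hlt hf'
    rw [slope_def_field, lt_div_iff₀ (sub_pos.mpr hlt)] at this
    linarith
  · have := hf.slope_lt_of_hasDerivAt hy hx hgt hf'
    rw [slope_def_field, div_lt_iff₀ (sub_pos.mpr hgt)] at this
    linarith

theorem hasDerivAt_log_sub_log_one_sub_sub_mul {t : ℝ} (c : ℝ) (ht : t ∈ Ioo (0 : ℝ) 1) :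
    HasDerivAt (fun s => log s - log (1 - s) - c * s) (t⁻¹ + (1 - t)⁻¹ - c) t := by
  have h1t : 1 - t ≠ 0 := (sub_pos.mpr ht.2).ne'
  have := ((hasDerivAt_log ht.1.ne').sub (((hasDerivAt_id' t).const_sub 1).log h1t)).sub
    ((hasDerivAt_id' t).const_mul c)
  exact this.congr_deriv (by field_simp; ring)

theorem inv_add_inv_one_sub_sub_four_pos {t : ℝ} (ht : t ∈ Ioo (0 : ℝ) 1) (ht' : t ≠ 2⁻¹) :
    0 < t⁻¹ + (1 - t)⁻¹ - 4 := by
  have h0 := ht.1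
  have h1t : 0 < 1 - t := sub_pos.mpr ht.2
  have h2t : 1 - 2 * t ≠ 0 := by contrapose! ht'; linarith
  have : t⁻¹ + (1 - t)⁻¹ - 4 = (1 - 2 * t) ^ 2 / (t * (1 - t)) := by
    field_simp; ring
  rw [this]; positivity

theorem strictMonoOn_log_sub_log_one_sub_sub_four_mul :
    StrictMonoOn (fun t => log t - log (1 - t) - 4 * t) (Ioo 0 1) := by
  have hpiece : ∀ D ⊆ Ioo (0 : ℝ) 1, Convex ℝ D → 2⁻¹ ∉ interior D →
      StrictMonoOn (fun t => log t - log (1 - t) - 4 * t) D := by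
    intro D hD hconv hhalf
    refine strictMonoOn_of_deriv_pos hconv
      (fun t ht => (hasDerivAt_log_sub_log_one_sub_sub_mul 4 (hD ht)).continuousAt
        |>.continuousWithinAt) fun t ht => ?_
    have ht₀ := hD (interior_subset ht)
    rw [(hasDerivAt_log_sub_log_one_sub_sub_mul 4 ht₀).deriv]
    exact inv_add_inv_one_sub_sub_four_pos ht₀ (ne_of_mem_of_not_mem ht hhalf)
  rw [← Ioc_union_Ico_eq_Ioo (by norm_num : (0 : ℝ) < 2⁻¹) (by norm_num : (2⁻¹ : ℝ) < 1)]
  refine StrictMonoOn.union (hpiece _ ?_ (convex_Ioc _ _) ?_) (hpiece _ ?_ (convex_Ico _ _) ?_)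
    (isGreatest_Ioc (by norm_num)) (isLeast_Ico (by norm_num))
  · exact Ioc_subset_Ioo_right (by norm_num)
  · simp
  · exact Ico_subset_Ioo_left (by norm_num)
  · simp

theorem hasDerivAt_neg_binEntropy_sub_two_mul_sq {t : ℝ} (ht : t ∈ Ioo (0 : ℝ) 1) :
    HasDerivAt (fun s => -binEntropy s - 2 * s ^ 2) (log t - log (1 - t) - 4 * t) t := by
  have := (hasDerivAt_binEntropy ht.1.ne' ht.2.ne).neg.sub ((hasDerivAt_pow 2 t).const_mul 2)
  exact this.congr_deriv (by push_cast; ring)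

theorem strictConvexOn_neg_binEntropy_sub_two_mul_sq :
    StrictConvexOn ℝ (Ioo 0 1) (fun t => -binEntropy t - 2 * t ^ 2) := by
  refine StrictMonoOn.strictConvexOn_of_deriv (convex_Ioo 0 1) (by fun_prop) ?_
  rw [interior_Ioo]
  exact strictMonoOn_log_sub_log_one_sub_sub_four_mul.congr fun t ht =>
    (hasDerivAt_neg_binEntropy_sub_two_mul_sq ht).deriv.symm

theorem log_div_one_sub_mul_sub_add_two_mul_sq_lt {a b : ℝ} (ha : a ∈ Ioo (0 : ℝ) 1)
    (hb : b ∈ Ioo (0 : ℝ) 1) (hab : a ≠ b) :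
    log (a / (1 - a)) * (b - a) + 2 * (b - a) ^ 2 < binEntropy a - binEntropy b := by
  have := strictConvexOn_neg_binEntropy_sub_two_mul_sq.add_mul_sub_lt_of_hasDerivAt ha hb hab
    (hasDerivAt_neg_binEntropy_sub_two_mul_sq ha)
  rw [log_div ha.1.ne' (sub_pos.mpr ha.2).ne']
  linarith

theorem g_eq_sum_neg_binEntropy (m : ℕ) (θ : Fin m → ℝ) :
    g m θ = (1 / (m : ℝ)) * ∑ i, -binEntropy (θ i) := by
  simp only [g, binEntropy, log_inv]
  congr 1
  exact Finset.sum_congr rfl fun i _ => by ring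

theorem slores_strong_convexity_strict_general (m p : ℕ)
    (X : Fin p → Fin m → ℝ) (b : Fin m → ℝ)
    (lam : ℝ) (θ₁ θ₂ : Fin m → ℝ)
    (h₁ : θ₁ ∈ Feas m p X b lam) (h₂ : θ₂ ∈ Feas m p X b lam) (hne : θ₁ ≠ θ₂) :
    g m θ₂ - g m θ₁ > (∑ i, gradg m θ₁ i * (θ₂ i - θ₁ i))
      + (2 / (m : ℝ)) * ∑ i, (θ₂ i - θ₁ i) ^ 2 := by
  have hθ₁ (i : Fin m) : θ₁ i ∈ Ioo (0 : ℝ) 1 := h₁.1 i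
  have hθ₂ (i : Fin m) : θ₂ i ∈ Ioo (0 : ℝ) 1 := h₂.1 i
  obtain ⟨i₀, hi₀⟩ := Function.ne_iff.mp hne
  have hsum : ∑ i, (log (θ₁ i / (1 - θ₁ i)) * (θ₂ i - θ₁ i) + 2 * (θ₂ i - θ₁ i) ^ 2)
      < ∑ i, (binEntropy (θ₁ i) - binEntropy (θ₂ i)) := by
    refine Finset.sum_lt_sum (fun i _ => ?_) ⟨i₀, Finset.mem_univ _,
      log_div_one_sub_mul_sub_add_two_mul_sq_lt (hθ₁ i₀) (hθ₂ i₀) hi₀⟩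
    rcases eq_or_ne (θ₁ i) (θ₂ i) with h | h
    · simp [h]
    · exact (log_div_one_sub_mul_sub_add_two_mul_sq_lt (hθ₁ i) (hθ₂ i) h).le
  have hm : (0 : ℝ) < 1 / m := by have := i₀.pos; positivity
  have hrhs : (∑ i, gradg m θ₁ i * (θ₂ i - θ₁ i)) + (2 / (m : ℝ)) * ∑ i, (θ₂ i - θ₁ i) ^ 2
      = 1 / m * ∑ i, (log (θ₁ i / (1 - θ₁ i)) * (θ₂ i - θ₁ i) + 2 * (θ₂ i - θ₁ i) ^ 2) := by
    simp only [gradg, Finset.mul_sum, ← Finset.sum_add_distrib]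
    exact Finset.sum_congr rfl fun i _ => by ring
  rw [gt_iff_lt, hrhs, g_eq_sum_neg_binEntropy, g_eq_sum_neg_binEntropy, ← mul_sub,
    ← Finset.sum_sub_distrib]
  simpa only [neg_sub_neg] using mul_lt_mul_of_pos_left hsum hm

/-- Lemma 1(b): for `λ > 0` and distinct `θ₁, θ₂ ∈ F_λ`, the strict inequality
`g(θ₂) − g(θ₁) > ⟨∇g(θ₁), θ₂ − θ₁⟩ + (2/m)‖θ₂ − θ₁‖₂²` holds. -/
theorem slores_strong_convexity_strict (m p : ℕ) (hm : 1 ≤ m) (hp : 1 ≤ p)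
    (X : Fin p → Fin m → ℝ) (b : Fin m → ℝ) (hb : ∀ i, b i = 1 ∨ b i = -1)
    (lam : ℝ) (hlam : 0 < lam) (θ₁ θ₂ : Fin m → ℝ)
    (h₁ : θ₁ ∈ Feas m p X b lam) (h₂ : θ₂ ∈ Feas m p X b lam) (hne : θ₁ ≠ θ₂) :
    g m θ₂ - g m θ₁ > (∑ i, gradg m θ₁ i * (θ₂ i - θ₁ i))
      + (2 / (m : ℝ)) * ∑ i, (θ₂ i - θ₁ i) ^ 2 :=
  slores_strong_convexity_strict_general m p X b lam θ₁ θ₂ h₁ h₂ hne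
end

section
/- Assume m⁺ ≥ 1 and m⁻ ≥ 1. Then for every λ > 0 the dual feasible set F_λ is nonempty. In particular, if λ ≥ λ_max then θ_max ∈ F_λ, and if 0 < λ ≤ λ_max then (λ/λ_max)·θ_max ∈ F_λ. -/
open scoped Classical in
/-- `m⁺ = #{i : b_i = 1}`. -/
noncomputable def mPlus (m : ℕ) (b : Fin m → ℝ) : ℕ :=
  (Finset.univ.filter (fun i => b i = 1)).card

open scoped Classical in
/-- `m⁻ = #{i : b_i = −1}`. -/
noncomputable def mMinus (m : ℕ) (b : Fin m → ℝ) : ℕ :=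
  (Finset.univ.filter (fun i => b i = -1)).card

open scoped Classical in
/-- `θ_max`, with `(θ_max)_i = m⁻/m` if `b_i = 1` and `m⁺/m` if `b_i = −1`. -/
noncomputable def thetaMax (m : ℕ) (b : Fin m → ℝ) : Fin m → ℝ :=
  fun i => if b i = 1 then (mMinus m b : ℝ) / m else (mPlus m b : ℝ) / m

/-- `λ_max = (1/m) max_j |⟨θ_max, x̄^j⟩|`. -/
noncomputable def lamMax (m p : ℕ) (X : Fin p → Fin m → ℝ) (b : Fin m → ℝ) : ℝ :=
  (1 / (m : ℝ)) * ⨆ j : Fin p, |∑ i, thetaMax m b i * X j i|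

open scoped Classical in
lemma card_sum_eq (m : ℕ) (b : Fin m → ℝ) (hb : ∀ i, b i = 1 ∨ b i = -1) :
    mPlus m b + mMinus m b = m := by
  have h : (Finset.univ.filter (fun i => ¬ b i = 1)) =
      (Finset.univ.filter (fun i => b i = -1)) := by
    ext i
    simp only [Finset.mem_filter, Finset.mem_univ, true_and]
    rcases hb i with h1 | h1 <;> simp [h1] <;> norm_num
  have := Finset.card_filter_add_card_filter_not (s := Finset.univ)
    (p := fun i : Fin m => b i = 1)
  rw [h] at this
  simpa [mPlus, mMinus] using this

open scoped Classical in
lemma theta_bounds (m : ℕ) (b : Fin m → ℝ) (hb : ∀ i, b i = 1 ∨ b i = -1)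
    (hmp : 1 ≤ mPlus m b) (hmm : 1 ≤ mMinus m b) (i : Fin m) :
    0 < thetaMax m b i ∧ thetaMax m b i < 1 := by
  have hsum := card_sum_eq m b hb
  have hm0 : 0 < (m : ℝ) := by
    have : 1 ≤ m := by omega
    exact_mod_cast Nat.lt_of_lt_of_le Nat.zero_lt_one this
  have hmmlt : (mMinus m b : ℝ) < m := by exact_mod_cast (by omega : mMinus m b < m)
  have hmplt : (mPlus m b : ℝ) < m := by exact_mod_cast (by omega : mPlus m b < m)
  have hmmpos : (0:ℝ) < mMinus m b := by exact_mod_cast hmm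
  have hmppos : (0:ℝ) < mPlus m b := by exact_mod_cast hmp
  unfold thetaMax
  split
  · exact ⟨div_pos hmmpos hm0, (div_lt_one hm0).mpr hmmlt⟩
  · exact ⟨div_pos hmppos hm0, (div_lt_one hm0).mpr hmplt⟩

open scoped Classical in
lemma theta_inner_b (m : ℕ) (hm : 1 ≤ m) (b : Fin m → ℝ)
    (hb : ∀ i, b i = 1 ∨ b i = -1) :
    ∑ i, thetaMax m b i * b i = 0 := by
  rw [← Finset.sum_filter_add_sum_filter_not Finset.univ (fun i => b i = 1)]
  have h1 : ∑ i ∈ Finset.univ.filter (fun i => b i = 1), thetaMax m b i * b i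
      = (mPlus m b : ℝ) * ((mMinus m b : ℝ) / m) := by
    rw [Finset.sum_congr rfl (fun i hi => ?_), Finset.sum_const, mPlus, nsmul_eq_mul]
    have hbi : b i = 1 := (Finset.mem_filter.mp hi).2
    simp [thetaMax, hbi]
  have h2 : ∑ i ∈ Finset.univ.filter (fun i => ¬ b i = 1), thetaMax m b i * b i
      = (mMinus m b : ℝ) * (-((mPlus m b : ℝ) / m)) := by
    have hset : (Finset.univ.filter (fun i => ¬ b i = 1)) =
        (Finset.univ.filter (fun i => b i = -1)) := by
      ext i
      simp only [Finset.mem_filter, Finset.mem_univ, true_and]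
      rcases hb i with h1 | h1 <;> simp [h1] <;> norm_num
    rw [hset, Finset.sum_congr rfl (fun i hi => ?_), Finset.sum_const, mMinus, nsmul_eq_mul]
    have hbi : b i = -1 := (Finset.mem_filter.mp hi).2
    have hne : b i ≠ 1 := by rw [hbi]; norm_num
    rw [thetaMax, if_neg hne, hbi]
    ring
  rw [h1, h2]
  ring

lemma lamMax_bound (m p : ℕ) (hm : 1 ≤ m) (hp : 1 ≤ p)
    (X : Fin p → Fin m → ℝ) (b : Fin m → ℝ) (j : Fin p) :
    |∑ i, thetaMax m b i * X j i| ≤ (m : ℝ) * lamMax m p X b := by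
  have hm0 : (0:ℝ) < m := by
    exact_mod_cast Nat.lt_of_lt_of_le Nat.zero_lt_one hm
  have hbdd : BddAbove (Set.range fun j : Fin p => |∑ i, thetaMax m b i * X j i|) :=
    (Set.finite_range _).bddAbove
  have hle := le_ciSup hbdd j
  calc |∑ i, thetaMax m b i * X j i| ≤ ⨆ j : Fin p, |∑ i, thetaMax m b i * X j i| := hle
    _ = (m : ℝ) * lamMax m p X b := by
        unfold lamMax; field_simp

lemma lamMax_nonneg (m p : ℕ) (hm : 1 ≤ m) (hp : 1 ≤ p)
    (X : Fin p → Fin m → ℝ) (b : Fin m → ℝ) : 0 ≤ lamMax m p X b := by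
  have hm0 : (0:ℝ) < m := by
    exact_mod_cast Nat.lt_of_lt_of_le Nat.zero_lt_one hm
  have : Nonempty (Fin p) := ⟨⟨0, by omega⟩⟩
  have j0 : Fin p := ⟨0, by omega⟩
  have := lamMax_bound m p hm hp X b j0
  nlinarith [abs_nonneg (∑ i, thetaMax m b i * X j0 i)]

/-- Lemma A: if `m⁺ ≥ 1` and `m⁻ ≥ 1`, then for every `λ > 0` the dual feasible
set `F_λ` is nonempty; in particular `θ_max ∈ F_λ` when `λ ≥ λ_max`, and
`(λ/λ_max)·θ_max ∈ F_λ` when `0 < λ ≤ λ_max`. -/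
theorem slores_dual_feasible (m p : ℕ) (hm : 1 ≤ m) (hp : 1 ≤ p)
    (X : Fin p → Fin m → ℝ) (b : Fin m → ℝ) (hb : ∀ i, b i = 1 ∨ b i = -1)
    (hmp : 1 ≤ mPlus m b) (hmm : 1 ≤ mMinus m b)
    (lam : ℝ) (hlam : 0 < lam) :
    (Feas m p X b lam).Nonempty ∧
    (lamMax m p X b ≤ lam → thetaMax m b ∈ Feas m p X b lam) ∧
    (lam ≤ lamMax m p X b →
      (fun i => (lam / lamMax m p X b) * thetaMax m b i) ∈ Feas m p X b lam) := by
  have hm0 : (0:ℝ) < m := by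
    exact_mod_cast Nat.lt_of_lt_of_le Nat.zero_lt_one hm
  have hbounds := theta_bounds m b hb hmp hmm
  have hinner := theta_inner_b m hm b hb
  have hXb := lamMax_bound m p hm hp X b
  have hlmx0 := lamMax_nonneg m p hm hp X b
  have h2 : lamMax m p X b ≤ lam → thetaMax m b ∈ Feas m p X b lam := by
    intro hle
    refine ⟨hbounds, fun j => ?_, hinner⟩
    calc |∑ i, thetaMax m b i * X j i| ≤ (m:ℝ) * lamMax m p X b := hXb j
      _ ≤ (m:ℝ) * lam := by nlinarith
  have h3 : lam ≤ lamMax m p X b →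
      (fun i => (lam / lamMax m p X b) * thetaMax m b i) ∈ Feas m p X b lam := by
    intro hle
    have hlmpos : 0 < lamMax m p X b := lt_of_lt_of_le hlam hle
    set t := lam / lamMax m p X b with ht
    have htpos : 0 < t := div_pos hlam hlmpos
    have htle : t ≤ 1 := (div_le_one hlmpos).mpr hle
    refine ⟨fun i => ?_, fun j => ?_, ?_⟩
    · have h := hbounds i
      constructor
      · exact mul_pos htpos h.1
      · calc t * thetaMax m b i ≤ 1 * thetaMax m b i := by nlinarith [h.1]
          _ < 1 := by linarith [h.2]
    · have : ∑ i, t * thetaMax m b i * X j i = t * ∑ i, thetaMax m b i * X j i := by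
        rw [Finset.mul_sum]; exact Finset.sum_congr rfl (fun i _ => by ring)
      rw [this, abs_mul, abs_of_pos htpos]
      have := hXb j
      have hteq : t * lamMax m p X b = lam := div_mul_cancel₀ lam (ne_of_gt hlmpos)
      calc t * |∑ i, thetaMax m b i * X j i| ≤ t * ((m:ℝ) * lamMax m p X b) := by
            nlinarith
        _ = (m:ℝ) * lam := by rw [← hteq]; ring
    · have : ∑ i, t * thetaMax m b i * b i = t * ∑ i, thetaMax m b i * b i := by
        rw [Finset.mul_sum]; exact Finset.sum_congr rfl (fun i _ => by ring)
      rw [this, hinner, mul_zero]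
  refine ⟨?_, h2, h3⟩
  rcases le_total (lamMax m p X b) lam with h | h
  · exact ⟨_, h2 h⟩
  · exact ⟨_, h3 h⟩
end

section
/- Assume m⁺ ≥ 1, m⁻ ≥ 1 and λ_max > 0. Then for every λ ∈ (0, λ_max], the function g attains its minimum over F_λ at a unique point; i.e., there exists a unique θ*_λ ∈ F_λ such that g(θ*_λ) ≤ g(θ) for all θ ∈ F_λ. -/
/-!
Up to the factor `-1/m`, `g` is the total binary entropy `θ ↦ ∑ i, binEntropy (θ i)`, which is
continuous and strictly concave on the cube `[0,1]^m`. The linear constraints of `F_λ` cut out a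
closed convex set, so the entropy attains its maximum on its intersection with the closed cube,
and by strict concavity it has at most one maximizer on the convex set `F_λ`. A maximizer cannot
lie on the boundary of the cube: `binEntropy` has infinite slope at `0` and `1`, so moving a little
from such a point towards a feasible point inside the open cube (for instance
`(λ/λ_max) • θ_max`) increases the entropy.
-/

open Real Set Filter Topology

section SumBinEntropy

variable {ι : Type*} [Fintype ι]

lemma binEntropy_sub_mul_log_two_le {a c t : ℝ} (ha : a ∈ Icc 0 1) (hc : c ∈ Icc 0 1)
    (ht : t ∈ Icc 0 1) : binEntropy a - t * log 2 ≤ binEntropy (a + t * (c - a)) := by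
  have hconc := strictConcave_binEntropy.concaveOn.2 ha hc (sub_nonneg.2 ht.2) ht.1
    (sub_add_cancel 1 t)
  simp only [smul_eq_mul] at hconc
  rw [show a + t * (c - a) = (1 - t) * a + t * c by ring]
  nlinarith [binEntropy_nonneg hc.1 hc.2, binEntropy_le_log_two (p := a), ht.1]

lemma tendsto_binEntropy_mul_div_atTop {c : ℝ} (hc : 0 < c) :
    Tendsto (fun t => binEntropy (t * c) / t) (𝓝[>] 0) atTop := by
  have hlog : Tendsto (fun t => -c * log (t * c)) (𝓝[>] 0) atTop := by
    refine Tendsto.const_mul_atBot_of_neg (neg_neg_of_pos hc) (tendsto_log_nhdsGT_zero.comp ?_)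
    refine tendsto_nhdsWithin_iff.2 ⟨?_, ?_⟩
    · exact ((continuous_mul_const c).tendsto' 0 0 (zero_mul c)).mono_left nhdsWithin_le_nhds
    · filter_upwards [self_mem_nhdsWithin] with t (ht : 0 < t) using mul_pos ht hc
  refine tendsto_atTop_mono' _ ?_ hlog
  filter_upwards [Ioo_mem_nhdsGT (inv_pos.2 hc)] with t ht
  have htc : t * c < 1 := by rw [← lt_div_iff₀ hc, one_div]; exact ht.2
  have hrest := negMulLog_nonneg (sub_nonneg.2 htc.le) (by nlinarith [ht.1])
  rw [le_div_iff₀ ht.1, binEntropy_eq_negMulLog_add_negMulLog_one_sub, negMulLog]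
  nlinarith

lemma tendsto_binEntropy_slope_atTop {a c : ℝ} (ha : a = 0 ∨ a = 1) (hc : c ∈ Ioo 0 1) :
    Tendsto (fun t => (binEntropy (a + t * (c - a)) - binEntropy a) / t) (𝓝[>] 0) atTop := by
  rcases ha with rfl | rfl
  · simpa using tendsto_binEntropy_mul_div_atTop hc.1
  · convert tendsto_binEntropy_mul_div_atTop (sub_pos.2 hc.2) using 2 with t
    rw [binEntropy_one, sub_zero, ← binEntropy_one_sub]
    ring_nf

noncomputable def sumBinEntropy (θ : ι → ℝ) : ℝ := ∑ i, binEntropy (θ i)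

lemma continuous_sumBinEntropy : Continuous (sumBinEntropy (ι := ι)) := by
  unfold sumBinEntropy
  fun_prop

lemma strictConcaveOn_sumBinEntropy :
    StrictConcaveOn ℝ (univ.pi fun _ : ι => Icc (0 : ℝ) 1) sumBinEntropy := by
  refine ⟨convex_pi fun _ _ => convex_Icc 0 1, fun x hx y hy hxy a b ha hb hab => ?_⟩
  obtain ⟨i, hi⟩ := Function.ne_iff.1 hxy
  simp only [sumBinEntropy, smul_eq_mul, Finset.mul_sum, ← Finset.sum_add_distrib, Pi.add_apply,
    Pi.smul_apply]
  exact Finset.sum_lt_sum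
    (fun j _ => strictConcave_binEntropy.concaveOn.2 (hx j trivial) (hy j trivial) ha.le hb.le hab)
    ⟨i, Finset.mem_univ i, strictConcave_binEntropy.2 (hx i trivial) (hy i trivial) hi ha hb hab⟩

lemma mem_pi_Ioo_of_isMaxOn_sumBinEntropy {S : Set (ι → ℝ)} (hS : Convex ℝ S)
    (hS01 : S ⊆ univ.pi fun _ => Icc 0 1) {θ₀ θ : ι → ℝ} (hθ₀S : θ₀ ∈ S)
    (hθ₀ : θ₀ ∈ univ.pi fun _ => Ioo 0 1) (hθS : θ ∈ S) (hmax : IsMaxOn sumBinEntropy S θ) :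
    θ ∈ univ.pi fun _ => Ioo 0 1 := by
  by_contra hθ
  obtain ⟨i₀, hi₀⟩ : ∃ i, θ i = 0 ∨ θ i = 1 := by
    obtain ⟨i, hi⟩ := not_forall.1 fun h => hθ fun i _ => h i
    obtain ⟨h0, h1⟩ := hS01 hθS i trivial
    exact ⟨i, by by_contra! h; exact hi ⟨h0.lt_of_ne' h.1, h1.lt_of_ne h.2⟩⟩
  set δ : ℝ → ι → ℝ := fun t i => binEntropy (θ i + t * (θ₀ i - θ i)) - binEntropy (θ i)
  obtain ⟨t, ht, hti₀⟩ := ((eventually_mem_set.2 (Ioo_mem_nhdsGT one_pos)).and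
    ((tendsto_binEntropy_slope_atTop hi₀ (hθ₀ i₀ trivial)).eventually_gt_atTop
      (Fintype.card ι * log 2))).exists
  have hδ : ∀ i, -(t * log 2) ≤ δ t i := fun i => by
    have := binEntropy_sub_mul_log_two_le (hS01 hθS i trivial) (hS01 hθ₀S i trivial)
      ⟨ht.1.le, ht.2.le⟩
    simp only [δ]; linarith
  have hδi₀ : t * (Fintype.card ι * log 2) < δ t i₀ := by
    rwa [lt_div_iff₀ ht.1, mul_comm] at hti₀
  have hsum : 0 < ∑ i, δ t i := by
    have := Finset.single_le_sum (fun i _ => neg_le_iff_add_nonneg.1 (hδ i)) (Finset.mem_univ i₀)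
    rw [Finset.sum_add_distrib, Finset.sum_const, Finset.card_univ, nsmul_eq_mul] at this
    linarith [mul_pos ht.1 (log_pos one_lt_two)]
  have hle : sumBinEntropy (θ + t • (θ₀ - θ)) ≤ sumBinEntropy θ :=
    hmax (hS.add_smul_sub_mem hθS hθ₀S ⟨ht.1.le, ht.2.le⟩)
  simp only [sumBinEntropy, Pi.add_apply, Pi.smul_apply, Pi.sub_apply, smul_eq_mul] at hle
  simp only [δ, Finset.sum_sub_distrib] at hsum
  linarith

theorem existsUnique_isMaxOn_sumBinEntropy {C : Set (ι → ℝ)} (hC : IsClosed C)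
    (hCv : Convex ℝ C) (hne : (C ∩ univ.pi fun _ => Ioo 0 1).Nonempty) :
    ∃! θ, θ ∈ C ∩ univ.pi (fun _ => Ioo 0 1) ∧
      IsMaxOn sumBinEntropy (C ∩ univ.pi fun _ => Ioo 0 1) θ := by
  obtain ⟨θ₀, hθ₀C, hθ₀⟩ := hne
  have hsub : univ.pi (fun _ : ι => Ioo (0 : ℝ) 1) ⊆ univ.pi fun _ => Icc 0 1 :=
    pi_mono fun _ _ => Ioo_subset_Icc_self
  have hK : IsCompact (C ∩ univ.pi fun _ => Icc 0 1) :=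
    (isCompact_univ_pi fun _ => isCompact_Icc).inter_left hC
  obtain ⟨θ, hθK, hmax⟩ := hK.exists_isMaxOn ⟨θ₀, hθ₀C, hsub hθ₀⟩
    continuous_sumBinEntropy.continuousOn
  have hθ := mem_pi_Ioo_of_isMaxOn_sumBinEntropy (hCv.inter (convex_pi fun _ _ => convex_Icc 0 1))
    inter_subset_right ⟨hθ₀C, hsub hθ₀⟩ hθ₀ hθK hmax
  refine ⟨θ, ⟨⟨hθK.1, hθ⟩, hmax.on_subset (inter_subset_inter_right C hsub)⟩,
    fun θ' hθ' => ?_⟩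
  exact (strictConcaveOn_sumBinEntropy.subset (inter_subset_right.trans hsub)
    (hCv.inter (convex_pi fun _ _ => convex_Ioo 0 1))).eq_of_isMaxOn hθ'.2
    (hmax.on_subset (inter_subset_inter_right C hsub)) hθ'.1 ⟨hθK.1, hθ⟩

end SumBinEntropy

lemma isLinearMap_dotProduct_left {ι : Type*} [Fintype ι] (w : ι → ℝ) :
    IsLinearMap ℝ (· ⬝ᵥ w) :=
  ⟨fun x y => add_dotProduct x y w, fun c x => smul_dotProduct c x w⟩

lemma convex_setOf_abs_dotProduct_le {ι : Type*} [Fintype ι] (w : ι → ℝ) (c : ℝ) :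
    Convex ℝ {θ : ι → ℝ | |θ ⬝ᵥ w| ≤ c} := by
  simpa only [preimage, mem_Icc, ← abs_le] using
    (convex_Icc (-c) c).is_linear_preimage (isLinearMap_dotProduct_left w)

section DualFeasibleSet

variable {m p : ℕ} (X : Fin p → Fin m → ℝ) (b : Fin m → ℝ) (lam : ℝ)

def linearConstraints : Set (Fin m → ℝ) :=
  (⋂ j, {θ | |θ ⬝ᵥ X j| ≤ m * lam}) ∩ {θ | θ ⬝ᵥ b = 0}

lemma feas_eq_linearConstraints_inter :
    Feas m p X b lam = linearConstraints X b lam ∩ univ.pi fun _ => Ioo 0 1 := by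
  ext θ
  simp only [Feas, linearConstraints, dotProduct, mem_ofPred_eq, mem_inter_iff, mem_iInter,
    mem_univ_pi, mem_Ioo]
  tauto

lemma isClosed_linearConstraints : IsClosed (linearConstraints X b lam) :=
  (isClosed_iInter fun _ =>
    isClosed_le (continuous_id.dotProduct continuous_const).abs continuous_const).inter
    (isClosed_eq (continuous_id.dotProduct continuous_const) continuous_const)

lemma convex_linearConstraints : Convex ℝ (linearConstraints X b lam) :=
  (convex_iInter fun j => convex_setOf_abs_dotProduct_le (X j) _).inter
    (convex_hyperplane (isLinearMap_dotProduct_left b) 0)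

end DualFeasibleSet

section ThetaMax

variable {m : ℕ} {b : Fin m → ℝ}

lemma mPlus_add_mMinus (hb : ∀ i, b i = 1 ∨ b i = -1) : mPlus m b + mMinus m b = m := by
  classical
  have hne : (Finset.univ.filter fun i => b i = -1) =
      Finset.univ.filter fun i => ¬ b i = 1 :=
    Finset.filter_congr fun i _ => by rcases hb i with h | h <;> norm_num [h]
  rw [mPlus, mMinus]
  convert Finset.card_filter_add_card_filter_not (s := Finset.univ) (fun i => b i = 1)
  simp

lemma thetaMax_mem_pi_Ioo (hb : ∀ i, b i = 1 ∨ b i = -1) (hmp : 1 ≤ mPlus m b)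
    (hmm : 1 ≤ mMinus m b) : thetaMax m b ∈ univ.pi fun _ => Ioo 0 1 := by
  have hsum := mPlus_add_mMinus hb
  have hm : (0 : ℝ) < m := by exact_mod_cast (by omega : 0 < m)
  intro i _
  unfold thetaMax
  split_ifs
  · exact ⟨by positivity, (div_lt_one hm).2 (by exact_mod_cast (by omega : mMinus m b < m))⟩
  · exact ⟨by positivity, (div_lt_one hm).2 (by exact_mod_cast (by omega : mPlus m b < m))⟩

lemma thetaMax_dotProduct_eq_zero (hb : ∀ i, b i = 1 ∨ b i = -1) : thetaMax m b ⬝ᵥ b = 0 := by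
  classical
  have hsplit : ∀ i, thetaMax m b i * b i = (if b i = 1 then (mMinus m b : ℝ) / m else 0) -
      (if b i = -1 then (mPlus m b : ℝ) / m else 0) := fun i => by
    rcases hb i with h | h <;> norm_num [thetaMax, h]
  rw [dotProduct, Finset.sum_congr rfl fun i _ => hsplit i, Finset.sum_sub_distrib,
    ← Finset.sum_filter, ← Finset.sum_filter, Finset.sum_const, Finset.sum_const]
  simp only [mPlus, mMinus, nsmul_eq_mul]
  ring

lemma abs_thetaMax_dotProduct_le {p : ℕ} (hm : 0 < m) (X : Fin p → Fin m → ℝ) (j : Fin p) :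
    |thetaMax m b ⬝ᵥ X j| ≤ m * lamMax m p X b := by
  rw [lamMax, ← mul_assoc, mul_one_div_cancel (by positivity), one_mul]
  exact le_ciSup (f := fun j => |thetaMax m b ⬝ᵥ X j|) (finite_range _).bddAbove j

end ThetaMax

lemma feas_nonempty {m p : ℕ} {X : Fin p → Fin m → ℝ} {b : Fin m → ℝ}
    (hb : ∀ i, b i = 1 ∨ b i = -1) (hmp : 1 ≤ mPlus m b) (hmm : 1 ≤ mMinus m b) {lam : ℝ}
    (hlam : 0 < lam) (hle : lam ≤ lamMax m p X b) : (Feas m p X b lam).Nonempty := by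
  have hm : 0 < m := by have := mPlus_add_mMinus hb; omega
  set r := lam / lamMax m p X b
  have hr : r ∈ Ioc 0 1 :=
    ⟨div_pos hlam (hlam.trans_le hle), div_le_one_of_le₀ hle (hlam.le.trans hle)⟩
  have hmax := thetaMax_mem_pi_Ioo hb hmp hmm
  refine ⟨r • thetaMax m b, fun i => ?_, fun j => ?_, ?_⟩
  · have := hmax i trivial
    exact ⟨mul_pos hr.1 this.1, (mul_le_of_le_one_left this.1.le hr.2).trans_lt this.2⟩
  · change |(r • thetaMax m b) ⬝ᵥ X j| ≤ m * lam
    rw [smul_dotProduct, smul_eq_mul, abs_mul, abs_of_pos hr.1]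
    calc r * |thetaMax m b ⬝ᵥ X j| ≤ r * (m * lamMax m p X b) :=
          mul_le_mul_of_nonneg_left (abs_thetaMax_dotProduct_le hm X j) hr.1.le
      _ = m * lam := by rw [mul_left_comm, div_mul_cancel₀ _ (hlam.trans_le hle).ne']
  · change (r • thetaMax m b) ⬝ᵥ b = 0
    rw [smul_dotProduct, thetaMax_dotProduct_eq_zero hb, smul_zero]

lemma g_eq_neg_sumBinEntropy_div (m : ℕ) (θ : Fin m → ℝ) : g m θ = -(sumBinEntropy θ / m) := by
  simp only [g, sumBinEntropy, binEntropy, log_inv, mul_neg, ← neg_add, Finset.sum_neg_distrib]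
  ring

theorem slores_dual_unique_minimizer_general (m p : ℕ) (hm : 1 ≤ m)
    (X : Fin p → Fin m → ℝ) (b : Fin m → ℝ) (hb : ∀ i, b i = 1 ∨ b i = -1)
    (hmp : 1 ≤ mPlus m b) (hmm : 1 ≤ mMinus m b)
    (lam : ℝ) (hlam : 0 < lam) (hle : lam ≤ lamMax m p X b) :
    ∃! θs : Fin m → ℝ, θs ∈ Feas m p X b lam ∧
      ∀ θ ∈ Feas m p X b lam, g m θs ≤ g m θ := by
  have hmR : (0 : ℝ) < m := by exact_mod_cast hm
  have hF := feas_nonempty hb hmp hmm hlam hle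
  rw [feas_eq_linearConstraints_inter] at hF ⊢
  refine (existsUnique_congr fun θ => ?_).1 (existsUnique_isMaxOn_sumBinEntropy
    (isClosed_linearConstraints X b lam) (convex_linearConstraints X b lam) hF)
  simp only [isMaxOn_iff, g_eq_neg_sumBinEntropy_div, neg_le_neg_iff,
    div_le_div_iff_of_pos_right hmR]

/-- Lemma B: for every `λ ∈ (0, λ_max]`, `g` attains its minimum over `F_λ` at a
unique point. -/
theorem slores_dual_unique_minimizer (m p : ℕ) (hm : 1 ≤ m) (hp : 1 ≤ p)
    (X : Fin p → Fin m → ℝ) (b : Fin m → ℝ) (hb : ∀ i, b i = 1 ∨ b i = -1)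
    (hmp : 1 ≤ mPlus m b) (hmm : 1 ≤ mMinus m b) (hlmax : 0 < lamMax m p X b)
    (lam : ℝ) (hlam : 0 < lam) (hle : lam ≤ lamMax m p X b) :
    ∃! θs : Fin m → ℝ, θs ∈ Feas m p X b lam ∧
      ∀ θ ∈ Feas m p X b lam, g m θs ≤ g m θ :=
  slores_dual_unique_minimizer_general m p hm X b hb hmp hmm lam hlam hle
end

section
/- Let λ_max ≥ λ₀ > λ > 0. Then ‖θ*_λ − θ*_{λ₀}‖₂² ≤ (m/2)·[ g((λ/λ₀)·θ*_{λ₀}) − g(θ*_{λ₀}) + (1 − λ/λ₀)·⟨∇g(θ*_{λ₀}), θ*_{λ₀}⟩ ], where ∇g(θ) is the gradient of g, given componentwise by [∇g(θ)]_i = (1/m) log(θ_i/(1 − θ_i)). -/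
/-!
With `r = λ/λ₀ ≤ 1`, the point `r θ*_{λ₀}` is feasible for `λ`, so `g(θ*_λ) ≤ g(r θ*_{λ₀})`.
For small `t > 0` the point `θ*_{λ₀} + t (θ*_λ − r θ*_{λ₀}) = (1 − t r) θ*_{λ₀} + t θ*_λ` is
feasible for `λ₀` (the linear constraints scale with `λ`, the box `(0,1)^m` is open), so
first-order optimality of `θ*_{λ₀}` gives `r ⟨∇g(θ*_{λ₀}), θ*_{λ₀}⟩ ≤ ⟨∇g(θ*_{λ₀}), θ*_λ⟩`.
Finally `m g` is `4`-strongly convex on the box: each summand is minus the binary entropy, whose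
second derivative `−1/(t(1−t))` is at most `−4`. The three inequalities combine to the bound.
-/

open Real Set Filter Topology

lemma ConcaveOn.le_add_mul_sub_of_hasDerivAt {S : Set ℝ} {f : ℝ → ℝ} {f' x y : ℝ}
    (hf : ConcaveOn ℝ S f) (hx : x ∈ S) (hy : y ∈ S) (hf' : HasDerivAt f f' x) :
    f y ≤ f x + f' * (y - x) := by
  rcases lt_trichotomy x y with hxy | rfl | hyx
  · have := hf.slope_le_of_hasDerivAt hx hy hxy hf'
    rw [slope_def_field, div_le_iff₀ (sub_pos.2 hxy)] at this
    linarith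
  · simp
  · have := hf.le_slope_of_hasDerivAt hy hx hyx hf'
    rw [slope_def_field, le_div_iff₀ (sub_pos.2 hyx)] at this
    linarith

lemma neg_binEntropy (p : ℝ) : -binEntropy p = p * log p + (1 - p) * log (1 - p) := by
  simp only [binEntropy, log_inv]
  ring

lemma concaveOn_binEntropy_add_two_mul_sq :
    ConcaveOn ℝ (Icc 0 1) fun p => binEntropy p + 2 * p ^ 2 := by
  refine concaveOn_of_hasDerivWithinAt2_nonpos (f' := fun p => log (1 - p) - log p + 4 * p)
    (f'' := fun p => -(1 - p)⁻¹ - p⁻¹ + 4) (convex_Icc 0 1) (by fun_prop) ?_ ?_ ?_ <;>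
    rw [interior_Icc] <;> rintro p ⟨hp0, hp1⟩
  · exact ((hasDerivAt_binEntropy hp0.ne' hp1.ne).fun_add
      ((hasDerivAt_pow 2 p).const_mul 2)).hasDerivWithinAt.congr_deriv (by norm_num; ring)
  · have h1 : HasDerivAt (fun p => log (1 - p)) (-(1 - p)⁻¹) p :=
      (((hasDerivAt_id p).const_sub 1).log (by simp; linarith)).congr_deriv (by simp [neg_div])
    exact ((h1.fun_sub (hasDerivAt_log hp0.ne')).fun_add
      ((hasDerivAt_id p).const_mul 4)).hasDerivWithinAt.congr_deriv (by simp)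
  · have h1p : 0 < 1 - p := by linarith
    have hsq : -(1 - p)⁻¹ - p⁻¹ + 4 = -(1 - 2 * p) ^ 2 / (p * (1 - p)) := by
      field_simp
      ring
    rw [hsq]
    exact div_nonpos_of_nonpos_of_nonneg (by nlinarith [sq_nonneg (1 - 2 * p)]) (by positivity)

lemma binEntropy_add_two_mul_sq_le {x y : ℝ} (hx : x ∈ Ioo 0 1) (hy : y ∈ Icc 0 1) :
    binEntropy y + 2 * (y - x) ^ 2 ≤ binEntropy x + (log (1 - x) - log x) * (y - x) := by
  have hder : HasDerivAt (fun p => binEntropy p + 2 * p ^ 2) (log (1 - x) - log x + 4 * x) x :=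
    ((hasDerivAt_binEntropy hx.1.ne' hx.2.ne).fun_add
      ((hasDerivAt_pow 2 x).const_mul 2)).congr_deriv (by norm_num; ring)
  have htangent := concaveOn_binEntropy_add_two_mul_sq.le_add_mul_sub_of_hasDerivAt
    (Ioo_subset_Icc_self hx) hy hder
  linarith

section Objective

variable {m : ℕ}

lemma g_eq_neg_sum_binEntropy (θ : Fin m → ℝ) :
    g m θ = -(1 / (m : ℝ)) * ∑ i, binEntropy (θ i) := by
  simp only [g, neg_mul, ← mul_neg, ← Finset.sum_neg_distrib, neg_binEntropy]

lemma natCast_mul_g (θ : Fin m → ℝ) : (m : ℝ) * g m θ = -∑ i, binEntropy (θ i) := by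
  rcases Nat.eq_zero_or_pos m with rfl | hm
  · simp
  · rw [g_eq_neg_sum_binEntropy]
    field_simp

lemma gradg_eq {θ : Fin m → ℝ} {i : Fin m} (hθ : θ i ∈ Ioo 0 1) :
    gradg m θ i = -(1 / (m : ℝ)) * (log (1 - θ i) - log (θ i)) := by
  rw [gradg, log_div hθ.1.ne' (sub_pos.2 hθ.2).ne']
  ring

lemma natCast_mul_gradg {θ : Fin m → ℝ} {i : Fin m} (hθ : θ i ∈ Ioo 0 1) :
    (m : ℝ) * gradg m θ i = -(log (1 - θ i) - log (θ i)) := by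
  have : (m : ℝ) ≠ 0 := Nat.cast_ne_zero.2 i.pos.ne'
  rw [gradg_eq hθ]
  field_simp

lemma hasFDerivAt_g {θ : Fin m → ℝ} (hθ : ∀ i, θ i ∈ Ioo 0 1) :
    HasFDerivAt (g m)
      (∑ i, gradg m θ i • ContinuousLinearMap.proj i : (Fin m → ℝ) →L[ℝ] ℝ) θ := by
  have hsum : HasFDerivAt (fun θ : Fin m → ℝ => ∑ i, binEntropy (θ i))
      (∑ i, (log (1 - θ i) - log (θ i)) • ContinuousLinearMap.proj i : (Fin m → ℝ) →L[ℝ] ℝ) θ :=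
    HasFDerivAt.fun_sum fun i _ => HasDerivAt.comp_hasFDerivAt (f := fun θ' : Fin m → ℝ => θ' i) θ
      (hasDerivAt_binEntropy (hθ i).1.ne' (hθ i).2.ne) (hasFDerivAt_apply i θ)
  rw [show g m = _ from funext g_eq_neg_sum_binEntropy]
  refine (hsum.const_mul _).congr_fderiv ?_
  ext v
  simp [gradg_eq (hθ _), Finset.mul_sum, mul_assoc]

lemma gradg_dotProduct_nonneg_of_isMinOn {s : Set (Fin m → ℝ)} {θ d : Fin m → ℝ}
    (hθ : ∀ i, θ i ∈ Ioo 0 1) (hmin : IsMinOn (g m) s θ)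
    (hd : ∃ᶠ t in 𝓝[>] (0 : ℝ), θ + t • d ∈ s) : 0 ≤ gradg m θ ⬝ᵥ d := by
  simpa [dotProduct] using hmin.localize.hasFDerivWithinAt_nonneg
    (hasFDerivAt_g hθ).hasFDerivWithinAt (mem_posTangentConeAt_of_frequently_mem hd)

lemma two_mul_sum_sq_sub_le_bregman_g {θ θ' : Fin m → ℝ} (hθ : ∀ i, θ i ∈ Ioo 0 1)
    (hθ' : ∀ i, θ' i ∈ Icc 0 1) :
    2 * ∑ i, (θ' i - θ i) ^ 2 ≤ m * (g m θ' - g m θ - gradg m θ ⬝ᵥ (θ' - θ)) := by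
  have hi : ∀ i, 2 * (θ' i - θ i) ^ 2 ≤ binEntropy (θ i) - binEntropy (θ' i)
      + (log (1 - θ i) - log (θ i)) * (θ' i - θ i) := fun i => by
    linarith [binEntropy_add_two_mul_sq_le (hθ i) (hθ' i)]
  calc 2 * ∑ i, (θ' i - θ i) ^ 2 ≤ ∑ i, (binEntropy (θ i) - binEntropy (θ' i)
        + (log (1 - θ i) - log (θ i)) * (θ' i - θ i)) := by
        rw [Finset.mul_sum]
        exact Finset.sum_le_sum fun i _ => hi i
    _ = m * (g m θ' - g m θ - gradg m θ ⬝ᵥ (θ' - θ)) := by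
        rw [mul_sub, mul_sub, natCast_mul_g, natCast_mul_g, dotProduct, Finset.mul_sum]
        simp only [← mul_assoc, natCast_mul_gradg (hθ _), Pi.sub_apply, neg_mul,
          Finset.sum_neg_distrib, Finset.sum_add_distrib, Finset.sum_sub_distrib]
        ring

end Objective

section Feasibility

variable {m p : ℕ} {X : Fin p → Fin m → ℝ} {b : Fin m → ℝ}

def dualConstraints (m p : ℕ) (X : Fin p → Fin m → ℝ) (b : Fin m → ℝ) (lam : ℝ) :
    Set (Fin m → ℝ) :=
  {θ | (∀ j, |θ ⬝ᵥ X j| ≤ m * lam) ∧ θ ⬝ᵥ b = 0}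

lemma Feas_eq_pi_inter_dualConstraints (lam : ℝ) :
    Feas m p X b lam = univ.pi (fun _ => Ioo 0 1) ∩ dualConstraints m p X b lam := by
  ext θ
  simp [Feas, dualConstraints, dotProduct]

lemma smul_mem_dualConstraints {lam c : ℝ} {θ : Fin m → ℝ} (hc : 0 ≤ c)
    (hθ : θ ∈ dualConstraints m p X b lam) : c • θ ∈ dualConstraints m p X b (c * lam) := by
  refine ⟨fun j => ?_, by rw [smul_dotProduct, hθ.2, smul_zero]⟩
  rw [smul_dotProduct, smul_eq_mul, abs_mul, abs_of_nonneg hc, mul_left_comm]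
  exact mul_le_mul_of_nonneg_left (hθ.1 j) hc

lemma add_mem_dualConstraints {lam lam' : ℝ} {θ θ' : Fin m → ℝ}
    (hθ : θ ∈ dualConstraints m p X b lam) (hθ' : θ' ∈ dualConstraints m p X b lam') :
    θ + θ' ∈ dualConstraints m p X b (lam + lam') := by
  refine ⟨fun j => ?_, by rw [add_dotProduct, hθ.2, hθ'.2, add_zero]⟩
  rw [add_dotProduct, mul_add]
  exact (abs_add_le _ _).trans (add_le_add (hθ.1 j) (hθ'.1 j))

lemma smul_mem_Feas {lam r : ℝ} {θ : Fin m → ℝ} (hr0 : 0 < r) (hr1 : r ≤ 1)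
    (hθ : θ ∈ Feas m p X b lam) : r • θ ∈ Feas m p X b (r * lam) := by
  rw [Feas_eq_pi_inter_dualConstraints] at hθ ⊢
  refine ⟨fun i _ => ?_, smul_mem_dualConstraints hr0.le hθ.2⟩
  obtain ⟨h0, h1⟩ := hθ.1 i (mem_univ i)
  exact ⟨mul_pos hr0 h0, (mul_le_of_le_one_left h0.le hr1).trans_lt h1⟩

lemma frequently_add_smul_sub_smul_mem_Feas {lam₀ r : ℝ} {θ₀ θ : Fin m → ℝ}
    (hθ₀ : θ₀ ∈ Feas m p X b lam₀) (hθ : θ ∈ Feas m p X b (r * lam₀)) :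
    ∃ᶠ t in 𝓝[>] (0 : ℝ), θ₀ + t • (θ - r • θ₀) ∈ Feas m p X b lam₀ := by
  rw [Feas_eq_pi_inter_dualConstraints] at hθ₀ hθ ⊢
  have hbox : ∀ᶠ t in 𝓝 (0 : ℝ), θ₀ + t • (θ - r • θ₀) ∈ univ.pi fun _ => Ioo 0 1 := by
    have hcont : Continuous fun t : ℝ => θ₀ + t • (θ - r • θ₀) := by fun_prop
    exact (hcont.tendsto' 0 θ₀ (by simp)).eventually_mem
      ((isOpen_set_pi finite_univ fun _ _ => isOpen_Ioo).mem_nhds hθ₀.1)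
  have hsmall : ∀ᶠ t in 𝓝 (0 : ℝ), t * r ≤ 1 :=
    ((continuous_mul_const r).tendsto' 0 0 (zero_mul r)).eventually (eventually_le_nhds one_pos)
  have hpos : ∀ᶠ t in 𝓝[>] (0 : ℝ), 0 < t := self_mem_nhdsWithin
  refine (((hbox.and hsmall).filter_mono nhdsWithin_le_nhds).and hpos).frequently.mono ?_
  rintro t ⟨⟨ht_box, ht_small⟩, ht_pos⟩
  refine ⟨ht_box, ?_⟩
  have hcomb := add_mem_dualConstraints (smul_mem_dualConstraints (sub_nonneg.2 ht_small) hθ₀.2)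
    (smul_mem_dualConstraints ht_pos.le hθ.2)
  rwa [show (1 - t * r) * lam₀ + t * (r * lam₀) = lam₀ by ring,
    show (1 - t * r) • θ₀ + t • θ = θ₀ + t • (θ - r • θ₀) by module] at hcomb

end Feasibility

theorem slores_ball_bound_general (m p : ℕ)
    (X : Fin p → Fin m → ℝ) (b : Fin m → ℝ)
    (lam lam₀ : ℝ) (hlam : 0 < lam) (hll : lam < lam₀)
    (θs θ₀ : Fin m → ℝ)
    (hθs : θs ∈ Feas m p X b lam ∧ ∀ θ ∈ Feas m p X b lam, g m θs ≤ g m θ)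
    (hθ₀ : θ₀ ∈ Feas m p X b lam₀ ∧ ∀ θ ∈ Feas m p X b lam₀, g m θ₀ ≤ g m θ) :
    ∑ i, (θs i - θ₀ i) ^ 2 ≤ ((m : ℝ) / 2) *
      (g m (fun i => (lam / lam₀) * θ₀ i) - g m θ₀
        + (1 - lam / lam₀) * ∑ i, gradg m θ₀ i * θ₀ i) := by
  obtain ⟨hsF, hsmin⟩ := hθs
  obtain ⟨h0F, h0min⟩ := hθ₀
  have hlam₀ : 0 < lam₀ := hlam.trans hll
  set r := lam / lam₀
  have hr0 : 0 < r := div_pos hlam hlam₀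
  have hr1 : r ≤ 1 := (div_le_one hlam₀).2 hll.le
  rw [show lam = r * lam₀ from (div_mul_cancel₀ _ hlam₀.ne').symm] at hsF hsmin
  have hopt : g m θs ≤ g m (r • θ₀) := hsmin _ (smul_mem_Feas hr0 hr1 h0F)
  have hvi : 0 ≤ gradg m θ₀ ⬝ᵥ (θs - r • θ₀) :=
    gradg_dotProduct_nonneg_of_isMinOn h0F.1 (isMinOn_iff.2 h0min)
      (frequently_add_smul_sub_smul_mem_Feas h0F hsF)
  have hstrong := two_mul_sum_sq_sub_le_bregman_g h0F.1 fun i => Ioo_subset_Icc_self (hsF.1 i)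
  rw [dotProduct_sub, dotProduct_smul, smul_eq_mul] at hvi
  rw [dotProduct_sub] at hstrong
  have hm : (0 : ℝ) ≤ m := m.cast_nonneg
  change _ ≤ (m / 2) * (g m (r • θ₀) - g m θ₀ + (1 - r) * (gradg m θ₀ ⬝ᵥ θ₀))
  nlinarith [mul_le_mul_of_nonneg_left hopt hm, mul_le_mul_of_nonneg_left hvi hm]

/-- Theorem 2(a): for `λ_max ≥ λ₀ > λ > 0`,
`‖θ*_λ − θ*_{λ₀}‖₂² ≤ (m/2)[g((λ/λ₀)θ*_{λ₀}) − g(θ*_{λ₀}) + (1 − λ/λ₀)⟨∇g(θ*_{λ₀}), θ*_{λ₀}⟩]`. -/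
theorem slores_ball_bound (m p : ℕ) (hm : 1 ≤ m) (hp : 1 ≤ p)
    (X : Fin p → Fin m → ℝ) (b : Fin m → ℝ) (hb : ∀ i, b i = 1 ∨ b i = -1)
    (hmp : 1 ≤ mPlus m b) (hmm : 1 ≤ mMinus m b) (hlmax : 0 < lamMax m p X b)
    (lam lam₀ : ℝ) (hlam : 0 < lam) (hll : lam < lam₀) (hle : lam₀ ≤ lamMax m p X b)
    (θs θ₀ : Fin m → ℝ)
    (hθs : θs ∈ Feas m p X b lam ∧ ∀ θ ∈ Feas m p X b lam, g m θs ≤ g m θ)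
    (hθ₀ : θ₀ ∈ Feas m p X b lam₀ ∧ ∀ θ ∈ Feas m p X b lam₀, g m θ₀ ≤ g m θ) :
    ∑ i, (θs i - θ₀ i) ^ 2 ≤ ((m : ℝ) / 2) *
      (g m (fun i => (lam / lam₀) * θ₀ i) - g m θ₀
        + (1 - lam / lam₀) * ∑ i, gradg m θ₀ i * θ₀ i) :=
  slores_ball_bound_general m p X b lam lam₀ hlam hll θs θ₀ hθs hθ₀
end

section
/- Let λ ∈ (0, λ_max] and let j ∈ {1,…,p}. If |⟨θ*_λ, x̄^j⟩| < mλ, then every minimizer (β, c) ∈ ℝ^p × ℝ of LRP_λ satisfies β_j = 0. -/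
/-- The ℓ1-regularized logistic regression objective `LRP_λ`:
`(1/m) Σ_i log(1 + exp(−⟨β, x̄_i⟩ − b_i c)) + λ‖β‖₁`, where the rows are
`(x̄_i)_j = X j i`. -/
noncomputable def LRP (m p : ℕ) (X : Fin p → Fin m → ℝ) (b : Fin m → ℝ) (lam : ℝ)
    (β : Fin p → ℝ) (c : ℝ) : ℝ :=
  (1 / (m : ℝ)) * ∑ i, Real.log (1 + Real.exp (-(∑ j, β j * X j i) - b i * c))
    + lam * ∑ j, |β j|

/-!
The sigmoids `σ_i` of the margins `-⟨β, x̄_i⟩ - b_i c` of a primal minimizer form a dual feasible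
point: optimality in `c` gives `⟨σ, b⟩ = 0`, and optimality in each coordinate `β_q` gives
`|⟨σ, x̄^q⟩| ≤ mλ` together with `β_q ⟨σ, x̄^q⟩ = |β_q| mλ`. Since `m ∇g(σ)` is the margin
vector, these conditions make `⟨∇g(σ), θ - σ⟩ ≥ 0` on `F_λ`; as the Bregman divergence of `g` is
a sum of Bernoulli Kullback–Leibler divergences, `g` is strictly convex and the dual minimizer
`θ*_λ` equals `σ`. So `β_j ≠ 0` would force `|⟨θ*_λ, x̄^j⟩| = mλ`.
-/

open Real Finset Function Filter Topology InformationTheory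

section BinaryEntropy

variable {a t : ℝ}

theorem negBinEntropy_sub_tangent_eq_klFun (ha : 0 < a) (ha1 : a < 1) (ht : 0 < t)
    (ht1 : t < 1) :
    (t * log t + (1 - t) * log (1 - t)) - (a * log a + (1 - a) * log (1 - a))
        - log (a / (1 - a)) * (t - a)
      = a * klFun (t / a) + (1 - a) * klFun ((1 - t) / (1 - a)) := by
  have ha' : 0 < 1 - a := by linarith
  have ht' : 0 < 1 - t := by linarith
  simp only [klFun_apply, log_div ht.ne' ha.ne', log_div ht'.ne' ha'.ne',
    log_div ha.ne' ha'.ne']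
  field_simp
  ring

theorem logit_mul_sub_le (ha : 0 < a) (ha1 : a < 1) (ht : 0 < t) (ht1 : t < 1) :
    log (a / (1 - a)) * (t - a)
      ≤ (t * log t + (1 - t) * log (1 - t)) - (a * log a + (1 - a) * log (1 - a)) := by
  have := negBinEntropy_sub_tangent_eq_klFun ha ha1 ht ht1
  have h1 := klFun_nonneg (div_pos ht ha).le
  have h2 := klFun_nonneg (div_pos (sub_pos.2 ht1) (sub_pos.2 ha1)).le
  nlinarith

theorem eq_of_sub_le_logit_mul (ha : 0 < a) (ha1 : a < 1) (ht : 0 < t) (ht1 : t < 1)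
    (h : (t * log t + (1 - t) * log (1 - t)) - (a * log a + (1 - a) * log (1 - a))
      ≤ log (a / (1 - a)) * (t - a)) :
    t = a := by
  have hkl := negBinEntropy_sub_tangent_eq_klFun ha ha1 ht ht1
  have h1 := klFun_nonneg (div_pos ht ha).le
  have h2 := klFun_nonneg (div_pos (sub_pos.2 ht1) (sub_pos.2 ha1)).le
  have h0 : klFun (t / a) = 0 := by nlinarith
  rw [klFun_eq_zero_iff (div_pos ht ha).le, div_eq_one_iff_eq ha.ne'] at h0
  exact h0

end BinaryEntropy

theorem eq_of_g_le_of_logit_inner_nonneg {m : ℕ} (hm : 0 < m) {θ σ : Fin m → ℝ}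
    (hθ : ∀ i, 0 < θ i ∧ θ i < 1) (hσ : ∀ i, 0 < σ i ∧ σ i < 1)
    (hinner : 0 ≤ ∑ i, log (σ i / (1 - σ i)) * (θ i - σ i)) (hg : g m θ ≤ g m σ) :
    θ = σ := by
  set gap : Fin m → ℝ := fun i => (θ i * log (θ i) + (1 - θ i) * log (1 - θ i))
    - (σ i * log (σ i) + (1 - σ i) * log (1 - σ i)) - log (σ i / (1 - σ i)) * (θ i - σ i)
  have hgap_nonneg : ∀ i, 0 ≤ gap i := fun i =>
    sub_nonneg.2 (logit_mul_sub_le (hσ i).1 (hσ i).2 (hθ i).1 (hθ i).2)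
  have hgap_sum : ∑ i, gap i ≤ 0 := by
    have hm' : (0 : ℝ) < 1 / m := by positivity
    unfold g at hg
    have := le_of_mul_le_mul_left hg hm'
    simp only [gap, sum_sub_distrib] at this ⊢
    linarith
  funext i
  have hgap_zero := (sum_eq_zero_iff_of_nonneg fun i _ => hgap_nonneg i).1
    (hgap_sum.antisymm (sum_nonneg fun i _ => hgap_nonneg i)) i (mem_univ i)
  exact eq_of_sub_le_logit_mul (hσ i).1 (hσ i).2 (hθ i).1 (hθ i).2
    (sub_nonpos.1 hgap_zero.le)

section SubgradientOfAbs

variable {f : ℝ → ℝ} {d x lam : ℝ}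

theorem abs_le_of_forall_le_add_mul_abs (hf : HasDerivAt f d x)
    (h : ∀ t, f x ≤ f (x + t) + lam * |t|) : |d| ≤ lam := by
  rw [abs_le]
  constructor
  · refine ge_of_tendsto hf.tendsto_slope_zero_right ?_
    filter_upwards [self_mem_nhdsWithin] with t (ht : 0 < t)
    have := h t
    rw [abs_of_pos ht] at this
    rw [smul_eq_mul, inv_mul_eq_div, le_div_iff₀ ht]
    linarith
  · refine le_of_tendsto hf.tendsto_slope_zero_left ?_
    filter_upwards [self_mem_nhdsWithin] with t (ht : t < 0)
    have := h t
    rw [abs_of_neg ht] at this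
    rw [smul_eq_mul, inv_mul_eq_div, div_le_iff_of_neg ht]
    linarith

/-- `-d` is a subgradient of `lam * |·|` at `x`. -/
theorem abs_le_and_mul_eq_of_forall_add_abs_le (hlam : 0 ≤ lam) (hf : HasDerivAt f d x)
    (hmin : ∀ y, f x + lam * |x| ≤ f y + lam * |y|) :
    |d| ≤ lam ∧ x * d = -(lam * |x|) := by
  refine ⟨abs_le_of_forall_le_add_mul_abs hf fun t => ?_, ?_⟩
  · have := hmin (x + t)
    nlinarith [abs_add_le x t]
  · -- Rescaling `x` keeps its sign, so along `s ↦ (1 + s) x` the penalty is linear in `s`.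
    have hscale : HasDerivAt (fun s => f ((1 + s) * x) + lam * |x| * s)
        (d * x + lam * |x|) 0 := by
      have hline : HasDerivAt (fun s : ℝ => (1 + s) * x) x 0 := by
        simpa using ((hasDerivAt_id (0 : ℝ)).const_add 1).mul_const x
      have hf' : HasDerivAt f d ((1 + 0) * x) := by simpa using hf
      simpa using (hf'.comp 0 hline).fun_add ((hasDerivAt_id' (0 : ℝ)).const_mul (lam * |x|))
    have hloc : IsLocalMin (fun s => f ((1 + s) * x) + lam * |x| * s) 0 := by
      filter_upwards [Ioi_mem_nhds (show (-1 : ℝ) < 0 by norm_num)] with s (hs : -1 < s)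
      have := hmin ((1 + s) * x)
      rw [abs_mul, abs_of_pos (by linarith : 0 < 1 + s)] at this
      simp only [one_mul, mul_zero, add_zero]
      nlinarith
    linarith [hloc.hasDerivAt_eq_zero hscale]

end SubgradientOfAbs

theorem Finset.sum_apply_update_eq {ι α M : Type*} [Fintype ι] [DecidableEq ι] [AddCommGroup M]
    (φ : ι → α → M) (β : ι → α) (q : ι) (y : α) :
    ∑ k, φ k (update β q y k) = ∑ k, φ k (β k) + (φ q y - φ q (β q)) := by
  simp_rw [apply_update φ, sum_update_of_mem (mem_univ q),
    ← add_sum_erase univ (fun k => φ k (β k)) (mem_univ q), sdiff_singleton_eq_erase]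
  abel

theorem Real.hasDerivAt_log_one_add_exp (x : ℝ) :
    HasDerivAt (fun x => log (1 + exp x)) (sigmoid x) x := by
  convert ((hasDerivAt_exp x).const_add 1).log (by positivity) using 1
  rw [sigmoid_def, exp_neg]
  field_simp
  ring

theorem HasDerivAt.log_one_add_exp {f : ℝ → ℝ} {f' x : ℝ} (hf : HasDerivAt f f' x) :
    HasDerivAt (fun y => Real.log (1 + Real.exp (f y))) (sigmoid (f x) * f') x :=
  (hasDerivAt_log_one_add_exp (f x)).comp x hf

theorem Real.log_sigmoid_div_one_sub_sigmoid (x : ℝ) : log (sigmoid x / (1 - sigmoid x)) = x := by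
  rw [← sigmoid_neg, ← sigmoid_mul_rexp_neg, div_mul_cancel_left₀ (sigmoid_pos x).ne', exp_neg,
    inv_inv, log_exp]

section Logistic

variable {m p : ℕ} (X : Fin p → Fin m → ℝ) (b : Fin m → ℝ)

noncomputable def logisticLoss (β : Fin p → ℝ) (c : ℝ) : ℝ :=
  (1 / (m : ℝ)) * ∑ i, log (1 + exp (-(∑ k, β k * X k i) - b i * c))

noncomputable def logisticDual (β : Fin p → ℝ) (c : ℝ) (i : Fin m) : ℝ :=
  sigmoid (-(∑ k, β k * X k i) - b i * c)

theorem LRP_eq_logisticLoss_add (lam : ℝ) (β : Fin p → ℝ) (c : ℝ) :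
    LRP m p X b lam β c = logisticLoss X b β c + lam * ∑ k, |β k| := rfl

theorem hasDerivAt_logisticLoss_update (β : Fin p → ℝ) (c : ℝ) (q : Fin p) :
    HasDerivAt (fun y => logisticLoss X b (update β q y) c)
      (-(∑ i, logisticDual X b β c i * X q i) / m) (β q) := by
  have hmargin : ∀ i, HasDerivAt (fun y => -(∑ k, update β q y k * X k i) - b i * c)
      (-X q i) (β q) := by
    intro i
    simp_rw [sum_apply_update_eq (fun k v => v * X k i)]
    have haffine : (fun y => -(∑ k, β k * X k i + (y * X q i - β q * X q i)) - b i * c)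
        = fun y => (β q * X q i - ∑ k, β k * X k i - b i * c) - y * X q i := by
      funext y; ring
    rw [haffine]
    exact (hasDerivAt_mul_const (X q i)).const_sub _
  have hsum := (HasDerivAt.fun_sum (u := univ) fun i _ =>
    (hmargin i).log_one_add_exp).const_mul (1 / (m : ℝ))
  refine hsum.congr_deriv ?_
  simp only [update_eq_self, logisticDual, mul_neg, sum_neg_distrib]
  ring

theorem hasDerivAt_logisticLoss_intercept (β : Fin p → ℝ) (c : ℝ) :
    HasDerivAt (fun c => logisticLoss X b β c) (-(∑ i, logisticDual X b β c i * b i) / m) c := by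
  have hmargin : ∀ i, HasDerivAt (fun c => -(∑ k, β k * X k i) - b i * c) (-b i) c := by
    intro i
    simpa using ((hasDerivAt_id' c).const_mul (b i)).const_sub (-(∑ k, β k * X k i))
  have hsum := (HasDerivAt.fun_sum (u := univ) fun i _ =>
    (hmargin i).log_one_add_exp).const_mul (1 / (m : ℝ))
  refine hsum.congr_deriv ?_
  simp only [logisticDual, mul_neg, sum_neg_distrib]
  ring

variable {X b} {lam : ℝ} {β : Fin p → ℝ} {c : ℝ}

theorem sum_logisticDual_mul_eq_zero (hm : 0 < m)
    (hmin : ∀ β' c', LRP m p X b lam β c ≤ LRP m p X b lam β' c') :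
    ∑ i, logisticDual X b β c i * b i = 0 := by
  have hloc : IsLocalMin (fun c' => logisticLoss X b β c') c :=
    .of_forall fun c' => by simpa [LRP_eq_logisticLoss_add] using hmin β c'
  have := hloc.hasDerivAt_eq_zero (hasDerivAt_logisticLoss_intercept X b β c)
  rw [div_eq_zero_iff, neg_eq_zero] at this
  exact this.resolve_right (Nat.cast_ne_zero.2 hm.ne')

theorem logisticDual_kkt (hm : 0 < m) (hlam : 0 ≤ lam)
    (hmin : ∀ β' c', LRP m p X b lam β c ≤ LRP m p X b lam β' c') (q : Fin p) :
    |∑ i, logisticDual X b β c i * X q i| ≤ m * lam ∧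
      β q * ∑ i, logisticDual X b β c i * X q i = |β q| * (m * lam) := by
  have hm' : (0 : ℝ) < m := Nat.cast_pos.2 hm
  have hcoord : ∀ y, logisticLoss X b (update β q (β q)) c + lam * |β q|
      ≤ logisticLoss X b (update β q y) c + lam * |y| := by
    intro y
    rw [update_eq_self]
    have := hmin (update β q y) c
    rw [LRP_eq_logisticLoss_add, LRP_eq_logisticLoss_add,
      sum_apply_update_eq (fun _ v => |v|)] at this
    linarith
  obtain ⟨hbound, hcompl⟩ :=
    abs_le_and_mul_eq_of_forall_add_abs_le hlam (hasDerivAt_logisticLoss_update X b β c q) hcoord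
  rw [abs_div, abs_neg, Nat.abs_cast, div_le_iff₀ hm'] at hbound
  refine ⟨by linarith, ?_⟩
  field_simp at hcompl
  linarith

theorem logisticDual_mem_Feas (hm : 0 < m) (hlam : 0 ≤ lam)
    (hmin : ∀ β' c', LRP m p X b lam β c ≤ LRP m p X b lam β' c') :
    logisticDual X b β c ∈ Feas m p X b lam :=
  ⟨fun _ => ⟨sigmoid_pos _, sigmoid_lt_one _⟩, fun q => (logisticDual_kkt hm hlam hmin q).1,
    sum_logisticDual_mul_eq_zero hm hmin⟩

theorem sum_margin_mul_eq (v : Fin m → ℝ) :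
    ∑ i, (-(∑ k, β k * X k i) - b i * c) * v i
      = -∑ k, β k * ∑ i, v i * X k i - c * ∑ i, v i * b i := by
  simp only [sub_mul, neg_mul, sum_sub_distrib, sum_neg_distrib, sum_mul, mul_sum]
  rw [sum_comm]
  simp only [mul_comm, mul_left_comm]

theorem logit_logisticDual_inner_sub_nonneg (hm : 0 < m) (hlam : 0 ≤ lam)
    (hmin : ∀ β' c', LRP m p X b lam β c ≤ LRP m p X b lam β' c') {θ : Fin m → ℝ}
    (hθ : θ ∈ Feas m p X b lam) :
    0 ≤ ∑ i, log (logisticDual X b β c i / (1 - logisticDual X b β c i))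
      * (θ i - logisticDual X b β c i) := by
  have hdual := sum_logisticDual_mul_eq_zero hm hmin
  set σ := logisticDual X b β c
  simp_rw [show ∀ i, log (σ i / (1 - σ i)) = -(∑ k, β k * X k i) - b i * c from
    fun i => log_sigmoid_div_one_sub_sigmoid _, sum_margin_mul_eq, sub_mul, sum_sub_distrib,
    hθ.2.2, hdual, sub_self, mul_zero, sub_zero, ← sum_neg_distrib]
  refine sum_nonneg fun k _ => ?_
  rw [mul_sub, neg_sub, sub_nonneg, (logisticDual_kkt hm hlam hmin k).2]
  calc β k * ∑ i, θ i * X k i ≤ |β k| * |∑ i, θ i * X k i| := by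
        rw [← abs_mul]; exact le_abs_self _
    _ ≤ |β k| * (m * lam) := by gcongr; exact hθ.2.1 k

end Logistic

theorem slores_kkt_screening_general (m p : ℕ)
    (X : Fin p → Fin m → ℝ) (b : Fin m → ℝ)
    (lam : ℝ)
    (θs : Fin m → ℝ)
    (hθs : θs ∈ Feas m p X b lam ∧ ∀ θ ∈ Feas m p X b lam, g m θs ≤ g m θ)
    (j : Fin p) (hj : |∑ i, θs i * X j i| < (m : ℝ) * lam)
    (β : Fin p → ℝ) (c : ℝ)
    (hmin : ∀ β' c', LRP m p X b lam β c ≤ LRP m p X b lam β' c') :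
    β j = 0 := by
  have hmlam : 0 < (m : ℝ) * lam := (abs_nonneg _).trans_lt hj
  have hm : 0 < m := Nat.pos_of_ne_zero fun h => by simp [h] at hmlam
  have hlam : 0 ≤ lam := (pos_of_mul_pos_right hmlam (Nat.cast_nonneg m)).le
  have hdual := logisticDual_mem_Feas hm hlam hmin
  have hθs_eq : θs = logisticDual X b β c :=
    eq_of_g_le_of_logit_inner_nonneg hm hθs.1.1 hdual.1
      (logit_logisticDual_inner_sub_nonneg hm hlam hmin hθs.1) (hθs.2 _ hdual)
  have hslack := (logisticDual_kkt hm hlam hmin j).2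
  rw [← hθs_eq] at hslack
  by_contra hβ
  have habs : |β j| * |∑ i, θs i * X j i| = |β j| * (m * lam) := by
    rw [← abs_mul, hslack, abs_mul, abs_abs, abs_of_pos hmlam]
  exact (mul_lt_mul_of_pos_left hj (abs_pos.2 hβ)).ne habs

/-- Rule (R1): for `λ ∈ (0, λ_max]` and a feature `j`, if `|⟨θ*_λ, x̄^j⟩| < mλ`,
then every minimizer `(β, c)` of `LRP_λ` satisfies `β_j = 0`. -/
theorem slores_kkt_screening (m p : ℕ) (hm : 1 ≤ m) (hp : 1 ≤ p)
    (X : Fin p → Fin m → ℝ) (b : Fin m → ℝ) (hb : ∀ i, b i = 1 ∨ b i = -1)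
    (hmp : 1 ≤ mPlus m b) (hmm : 1 ≤ mMinus m b) (hlmax : 0 < lamMax m p X b)
    (lam : ℝ) (hlam : 0 < lam) (hle : lam ≤ lamMax m p X b)
    (θs : Fin m → ℝ)
    (hθs : θs ∈ Feas m p X b lam ∧ ∀ θ ∈ Feas m p X b lam, g m θs ≤ g m θ)
    (j : Fin p) (hj : |∑ i, θs i * X j i| < (m : ℝ) * lam)
    (β : Fin p → ℝ) (c : ℝ)
    (hmin : ∀ β' c', LRP m p X b lam β c ≤ LRP m p X b lam β' c') :
    β j = 0 :=
  slores_kkt_screening_general m p X b lam θs hθs j hj β c hmin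
end

section
/- Let λ ∈ (0, λ_max) and let j ∈ {1,…,p}. If Px̄^j = 0, then every minimizer (β, c) ∈ ℝ^p × ℝ of LRP_λ satisfies β_j = 0. -/
/-- `P`, the orthogonal projection onto the orthogonal complement of `b`:
`Pv = v − (⟨v,b⟩/‖b‖₂²) b`. -/
noncomputable def Pb (m : ℕ) (b : Fin m → ℝ) (v : Fin m → ℝ) : Fin m → ℝ :=
  fun i => v i - ((∑ k, v k * b k) / (∑ k, (b k) ^ 2)) * b i
/-!
If `P x̄^j = 0` then `x̄^j = α b` for some `α`, so the contribution `β_j x̄^j` of feature `j`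
to the margins can be absorbed into the intercept, `c ↦ c + α β_j`, without changing the loss,
while the penalty drops by `λ |β_j|`. At a minimizer this drop must be `0`.
-/

open Function

theorem Finset.sum_apply_update_add {ι M N : Type*} [Fintype ι] [DecidableEq ι]
    [AddCommMonoid N] (g : ι → M → N) (f : ι → M) (j : ι) (v : M) :
    ∑ i, g i (update f j v i) + g j (f j) = ∑ i, g i (f i) + g j v := by
  simp_rw [apply_update g, sum_update_of_mem (mem_univ j),
    sum_eq_add_sum_sdiff_singleton_of_mem (mem_univ j) fun i => g i (f i)]
  abel

theorem exists_eq_smul_of_Pb_eq_zero {m : ℕ} {b v : Fin m → ℝ} (h : Pb m b v = 0) :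
    ∃ α : ℝ, v = α • b :=
  ⟨_, funext fun i => by simpa [Pb, sub_eq_zero] using congrFun h i⟩

theorem LRP_update_zero_add_abs {m p : ℕ} {X : Fin p → Fin m → ℝ} {b : Fin m → ℝ} {j : Fin p}
    {α : ℝ} (hX : X j = α • b) (lam : ℝ) (β : Fin p → ℝ) (c : ℝ) :
    LRP m p X b lam (update β j 0) (c + α * β j) + lam * |β j| = LRP m p X b lam β c := by
  have hmargin : ∀ i, ∑ k, update β j 0 k * X k i + b i * (c + α * β j)
      = ∑ k, β k * X k i + b i * c := by
    intro i
    have := Finset.sum_apply_update_add (fun k x => x * X k i) β j 0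
    simp only [zero_mul, add_zero, hX, Pi.smul_apply, smul_eq_mul] at this ⊢
    linear_combination this
  have hnorm := Finset.sum_apply_update_add (fun _ x => |x|) β j 0
  simp only [abs_zero, add_zero] at hnorm
  simp only [LRP, sub_eq_add_neg, ← neg_add, hmargin, ← hnorm]
  ring

theorem slores_orthogonal_feature_zero_general (m p : ℕ)
    (X : Fin p → Fin m → ℝ) (b : Fin m → ℝ)
    (lam : ℝ) (hlam : 0 < lam)
    (j : Fin p) (hPj : Pb m b (X j) = 0)
    (β : Fin p → ℝ) (c : ℝ)
    (hmin : ∀ β' c', LRP m p X b lam β c ≤ LRP m p X b lam β' c') :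
    β j = 0 := by
  obtain ⟨α, hα⟩ := exists_eq_smul_of_Pb_eq_zero hPj
  have hshift := LRP_update_zero_add_abs hα lam β c
  have hpen : lam * |β j| ≤ 0 := by linarith [hmin (update β j 0) (c + α * β j)]
  simpa using nonpos_of_mul_nonpos_right hpen hlam

/-- Corollary 5: for `λ ∈ (0, λ_max)`, if `Px̄^j = 0` then every minimizer
`(β, c)` of `LRP_λ` satisfies `β_j = 0`. -/
theorem slores_orthogonal_feature_zero (m p : ℕ) (hm : 1 ≤ m) (hp : 1 ≤ p)
    (X : Fin p → Fin m → ℝ) (b : Fin m → ℝ) (hb : ∀ i, b i = 1 ∨ b i = -1)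
    (hmp : 1 ≤ mPlus m b) (hmm : 1 ≤ mMinus m b) (hlmax : 0 < lamMax m p X b)
    (lam : ℝ) (hlam : 0 < lam) (hlt : lam < lamMax m p X b)
    (j : Fin p) (hPj : Pb m b (X j) = 0)
    (β : Fin p → ℝ) (c : ℝ)
    (hmin : ∀ β' c', LRP m p X b lam β c ≤ LRP m p X b lam β' c') :
    β j = 0 :=
  slores_orthogonal_feature_zero_general m p X b lam hlam j hPj β c hmin
end

section
/- Let λ_max ≥ λ₀ > λ > 0, let j ∈ {1,…,p} with Px̄^j ≠ 0, let ξ ∈ {+1, −1}, and set x̄ = −ξ·x̄^j. If ⟨Px̄, Px̄*⟩/(‖Px̄‖₂·‖Px̄*‖₂) ∈ (−1, 1], then min_{θ ∈ A} ⟨θ, x̄⟩ = max_{u₁ > 0, u₂ ≥ 0} ḡ(u₁, u₂), where ḡ(u₁, u₂) = −(1/(2u₁))·‖Px̄ + u₂·Px̄*‖₂² + u₂·m(λ₀ − λ) + ⟨θ₀, x̄⟩ − (1/2)·u₁·r²; moreover the maximum on the right-hand side is attained at some (u₁, u₂) with u₁ > 0 and u₂ ≥ 0. -/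
/-!
With `α = λ/λ₀`, the point `αθ₀` lies in `A`, strictly inside the ball: `r²` is half the sum of
the Bregman divergences of the negative binary entropy between `αθ₀` and `θ₀`, and that function
is `4`-strongly convex (binary Pinsker). Writing `θ = θ₀ + η` with `η ⊥ b`, the problem becomes
minimising `⟪η, Px̄⟫` over the ball `‖η‖ ≤ r` cut by the half-space `⟪η, Px̄*⟫ ≤ -m(λ₀ - λ)`, and
`ḡ - ⟪θ₀, x̄⟫` is its Lagrange dual function. Weak duality is the expansion of
`0 ≤ ‖u₁η + Px̄ + u₂Px̄*‖²`. The gap is closed explicitly: either only the ball constraint is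
active and `η = -r Px̄/‖Px̄‖`, or both are, and `η` is built from `Px̄*` and the component of `Px̄`
orthogonal to it, which is nonzero because `Px̄` is not a negative multiple of `Px̄*` and the
half-space meets the open ball.
-/

open Real
open scoped RealInnerProductSpace
open WithLp (toLp)

lemma two_mul_sub_div_add_lt_log_sub_log {a t : ℝ} (ha : 0 < a) (hat : a < t) :
    2 * (t - a) / (t + a) < log t - log a := by
  have h := lt_log_one_add_of_pos (div_pos (sub_pos.2 hat) ha)
  rwa [show 1 + (t - a) / a = t / a by field_simp; ring, log_div (by linarith) ha.ne',
    show (t - a) / a + 2 = (t + a) / a by field_simp; ring, ← mul_div_assoc,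
    div_div_div_cancel_right₀ ha.ne'] at h

lemma four_mul_sub_lt_log_div_sub_log_div {a t : ℝ} (ha : 0 < a) (hat : a < t) (ht : t < 1) :
    4 * (t - a) < log (t / (1 - t)) - log (a / (1 - a)) := by
  have h₁ := two_mul_sub_div_add_lt_log_sub_log ha hat
  have h₂ := two_mul_sub_div_add_lt_log_sub_log (sub_pos.2 ht) (sub_lt_sub_left hat 1)
  have h₃ : 4 * (t - a) ≤ 2 * (t - a) / (t + a) + 2 * (1 - a - (1 - t)) / (1 - a + (1 - t)) := by
    rw [div_add_div _ _ (by linarith) (by linarith), le_div_iff₀ (by nlinarith)]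
    nlinarith [sq_nonneg (t + a - 1)]
  rw [log_div (by linarith) (by linarith), log_div (by linarith) (by linarith)]
  linarith

/-- Binary Pinsker inequality, in Bregman form. -/
lemma two_mul_sq_lt_binEntropy_sub {a t : ℝ} (ha : 0 < a) (hat : a < t) (ht : t < 1) :
    2 * (a - t) ^ 2 < binEntropy t - binEntropy a - log (t / (1 - t)) * (a - t) := by
  set L := log (t / (1 - t))
  let ψ : ℝ → ℝ := fun x => -binEntropy x - L * x - 2 * (x - t) ^ 2
  have hψ : ∀ x ∈ Set.Icc a t,
      HasDerivAt ψ (-(log (1 - x) - log x) - L - 2 * (2 * (x - t))) x := by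
    intro x hx
    have hx₀ : x ≠ 0 := (ha.trans_le hx.1).ne'
    have hx₁ : x ≠ 1 := (hx.2.trans_lt ht).ne
    exact (((hasDerivAt_binEntropy hx₀ hx₁).neg.sub ((hasDerivAt_id x).const_mul L)).sub
      ((((hasDerivAt_id x).sub_const t).pow 2).const_mul 2)).congr_deriv (by simp)
  have hanti : StrictAntiOn ψ (Set.Icc a t) := by
    refine strictAntiOn_of_deriv_neg (convex_Icc a t)
      (fun x hx => (hψ x hx).continuousAt.continuousWithinAt) fun x hx => ?_
    rw [interior_Icc] at hx
    rw [(hψ x (Set.Ioo_subset_Icc_self hx)).deriv]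
    have := four_mul_sub_lt_log_div_sub_log_div (ha.trans hx.1) hx.2 ht
    rw [log_div (ha.trans hx.1).ne' (by linarith [hx.2])] at this
    linarith
  have := hanti (Set.left_mem_Icc.2 hat.le) (Set.right_mem_Icc.2 hat.le) hat
  simp only [ψ] at this
  nlinarith

lemma mul_log_add_one_sub_mul_log_one_sub (p : ℝ) :
    p * log p + (1 - p) * log (1 - p) = -binEntropy p := by
  simp only [binEntropy, log_inv]
  ring

lemma sum_sq_sub_lt_bregman_g {m : ℕ} [NeZero m] {θ θ' : Fin m → ℝ} (h₀ : ∀ i, 0 < θ' i)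
    (hlt : ∀ i, θ' i < θ i) (h₁ : ∀ i, θ i < 1) :
    ∑ i, (θ' i - θ i) ^ 2 < m / 2 * (g m θ' - g m θ - ∑ i, gradg m θ i * (θ' i - θ i)) := by
  have hm : (m : ℝ) ≠ 0 := Nat.cast_ne_zero.2 (NeZero.ne m)
  calc ∑ i, (θ' i - θ i) ^ 2 = 1 / 2 * ∑ i, 2 * (θ' i - θ i) ^ 2 := by
        rw [← Finset.mul_sum]; ring
    _ < 1 / 2 * ∑ i, (binEntropy (θ i) - binEntropy (θ' i)
          - log (θ i / (1 - θ i)) * (θ' i - θ i)) := by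
        gcongr with i
        · exact Finset.univ_nonempty
        · exact two_mul_sq_lt_binEntropy_sub (h₀ i) (hlt i) (h₁ i)
    _ = _ := by
        simp only [g, gradg, mul_log_add_one_sub_mul_log_one_sub, Finset.mul_sum,
          ← Finset.sum_sub_distrib]
        refine Finset.sum_congr rfl fun i _ => ?_
        field_simp
        ring

lemma sum_sq_smul_sub_lt_sq {m : ℕ} [NeZero m] {θ : Fin m → ℝ} (hθ : ∀ i, 0 < θ i ∧ θ i < 1)
    {α r : ℝ} (hα₀ : 0 < α) (hα₁ : α < 1)
    (hr : r = √(m / 2 * (g m (fun i => α * θ i) - g m θ + (1 - α) * ∑ i, gradg m θ i * θ i))) :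
    ∑ i, (α * θ i - θ i) ^ 2 < r ^ 2 := by
  have h := sum_sq_sub_lt_bregman_g (θ' := fun i => α * θ i) (fun i => mul_pos hα₀ (hθ i).1)
    (fun i => mul_lt_of_lt_one_left (hθ i).1 hα₁) (fun i => (hθ i).2)
  have e : ∑ i, gradg m θ i * (α * θ i - θ i) = -((1 - α) * ∑ i, gradg m θ i * θ i) := by
    rw [Finset.mul_sum, ← Finset.sum_neg_distrib]
    exact Finset.sum_congr rfl fun i _ => by ring
  rw [e, sub_neg_eq_add] at h
  rwa [hr, sq_sqrt ((Finset.sum_nonneg fun i _ => sq_nonneg _).trans h.le)]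

section BallHalfspace

variable {F : Type*} [NormedAddCommGroup F] [InnerProductSpace ℝ F]

/-- The Lagrange dual function of minimising `⟪η, c⟫` subject to `‖η‖ ≤ r` and `⟪η, d⟫ ≤ -s`. -/
noncomputable def ballHalfspaceDual (c d : F) (r s u₁ u₂ : ℝ) : ℝ :=
  -(1 / (2 * u₁)) * ‖c + u₂ • d‖ ^ 2 + u₂ * s - 1 / 2 * u₁ * r ^ 2

theorem ballHalfspaceDual_le_inner {c d η : F} {r s u₁ u₂ : ℝ} (hu₁ : 0 < u₁) (hu₂ : 0 ≤ u₂)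
    (hη : ‖η‖ ≤ r) (hηd : ⟪η, d⟫ ≤ -s) : ballHalfspaceDual c d r s u₁ u₂ ≤ ⟪η, c⟫ := by
  have hsq : 0 ≤ ‖u₁ • η + (c + u₂ • d)‖ ^ 2 := sq_nonneg _
  rw [norm_add_sq_real, norm_smul, real_inner_smul_left, inner_add_right, real_inner_smul_right,
    Real.norm_of_nonneg hu₁.le] at hsq
  have hball : ‖η‖ ^ 2 ≤ r ^ 2 := pow_le_pow_left₀ (norm_nonneg η) hη 2
  have key : 0 ≤ 2 * u₁ * (⟪η, c⟫ - ballHalfspaceDual c d r s u₁ u₂) := by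
    unfold ballHalfspaceDual
    field_simp
    nlinarith [mul_nonneg (mul_nonneg hu₁.le hu₂) (by linarith : 0 ≤ -s - ⟪η, d⟫),
      mul_le_mul_of_nonneg_left hball (sq_nonneg u₁)]
  exact sub_nonneg.1 (nonneg_of_mul_nonneg_right key (by positivity))

theorem exists_eq_ballHalfspaceDual_of_le {K : Submodule ℝ F} {c d : F} {r s : ℝ}
    (hc : c ∈ K) (hc₀ : c ≠ 0) (hr : 0 < r) (h : s * ‖c‖ ≤ r * ⟪c, d⟫) :
    ∃ u₁ u₂ η, 0 < u₁ ∧ 0 ≤ u₂ ∧ η ∈ K ∧ ‖η‖ ≤ r ∧ ⟪η, d⟫ ≤ -s ∧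
      ⟪η, c⟫ = ballHalfspaceDual c d r s u₁ u₂ := by
  have hc₀ : 0 < ‖c‖ := norm_pos_iff.2 hc₀
  refine ⟨‖c‖ / r, 0, -(r / ‖c‖) • c, div_pos hc₀ hr, le_rfl, K.smul_mem _ hc, ?_, ?_, ?_⟩
  · rw [norm_smul, norm_neg, Real.norm_of_nonneg (div_pos hr hc₀).le, div_mul_cancel₀ _ hc₀.ne']
  · rw [real_inner_smul_left, neg_mul, neg_le_neg_iff, div_mul_eq_mul_div, le_div_iff₀ hc₀]
    exact h
  · rw [ballHalfspaceDual, real_inner_smul_left, real_inner_self_eq_norm_sq, zero_smul, add_zero]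
    field_simp
    ring

lemma inner_sub_inner_div_norm_sq_smul_eq_zero (c d : F) :
    ⟪c - (⟪c, d⟫ / ‖d‖ ^ 2) • d, d⟫ = 0 := by
  rcases eq_or_ne d 0 with rfl | hd
  · simp
  rw [inner_sub_left, real_inner_smul_left, real_inner_self_eq_norm_sq]
  field_simp [norm_ne_zero_iff.2 hd]
  ring

lemma norm_sq_eq_norm_sub_inner_div_norm_sq_smul_sq_add {c d : F} (hd : d ≠ 0) :
    ‖c‖ ^ 2 = ‖c - (⟪c, d⟫ / ‖d‖ ^ 2) • d‖ ^ 2 + ⟪c, d⟫ ^ 2 / ‖d‖ ^ 2 := by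
  conv_lhs => rw [← sub_add_cancel c ((⟪c, d⟫ / ‖d‖ ^ 2) • d)]
  rw [norm_add_sq_real, real_inner_smul_right, inner_sub_inner_div_norm_sq_smul_eq_zero,
    norm_smul, mul_pow, Real.norm_eq_abs, sq_abs]
  field_simp [norm_ne_zero_iff.2 hd]
  ring

/-- If the component of `c` orthogonal to `d` vanished, `c` would be a multiple of `d`:
a negative one is excluded by `hcd`, a nonnegative one by `h` and `hsr`. -/
lemma sub_inner_div_norm_sq_smul_ne_zero {c d : F} {r s : ℝ} (hd : d ≠ 0) (hsr : s < r * ‖d‖)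
    (hcd : -(‖c‖ * ‖d‖) < ⟪c, d⟫) (h : r * ⟪c, d⟫ < s * ‖c‖) :
    c - (⟪c, d⟫ / ‖d‖ ^ 2) • d ≠ 0 := by
  intro he
  have hc_sq := norm_sq_eq_norm_sub_inner_div_norm_sq_smul_sq_add (c := c) hd
  rw [he, norm_zero] at hc_sq
  have hκ : ⟪c, d⟫ = ‖c‖ * ‖d‖ := by
    have : (⟪c, d⟫ - ‖c‖ * ‖d‖) * (⟪c, d⟫ + ‖c‖ * ‖d‖) = 0 := by
      field_simp [norm_ne_zero_iff.2 hd] at hc_sq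
      linear_combination -hc_sq
    exact sub_eq_zero.1 ((mul_eq_zero.1 this).resolve_right (by linarith))
  rw [hκ] at h
  nlinarith [norm_nonneg c]

theorem exists_eq_ballHalfspaceDual_of_lt {K : Submodule ℝ F} {c d : F} {r s : ℝ}
    (hc : c ∈ K) (hd : d ∈ K) (hs : 0 ≤ s) (hsr : s < r * ‖d‖)
    (hcd : -(‖c‖ * ‖d‖) < ⟪c, d⟫) (h : r * ⟪c, d⟫ < s * ‖c‖) :
    ∃ u₁ u₂ η, 0 < u₁ ∧ 0 ≤ u₂ ∧ η ∈ K ∧ ‖η‖ ≤ r ∧ ⟪η, d⟫ ≤ -s ∧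
      ⟪η, c⟫ = ballHalfspaceDual c d r s u₁ u₂ := by
  have hd₀ : d ≠ 0 := by rintro rfl; simp at hsr; linarith
  have hr : 0 < r := pos_of_mul_pos_left (hs.trans_lt hsr) (norm_nonneg d)
  have he₀ := norm_pos_iff.2 (sub_inner_div_norm_sq_smul_ne_zero hd₀ hsr hcd h)
  have hc_sq := norm_sq_eq_norm_sub_inner_div_norm_sq_smul_sq_add (c := c) hd₀
  set e := c - (⟪c, d⟫ / ‖d‖ ^ 2) • d
  have hed : ⟪e, d⟫ = 0 := inner_sub_inner_div_norm_sq_smul_eq_zero c d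
  have hec : ⟪e, c⟫ = ‖e‖ ^ 2 := by
    rw [← real_inner_self_eq_norm_sq, inner_sub_right e c, real_inner_smul_right, hed, mul_zero,
      sub_zero]
  have hρ : 0 < r ^ 2 - s ^ 2 / ‖d‖ ^ 2 :=
    sub_pos.2 ((div_lt_iff₀ (by positivity)).2 (by nlinarith))
  set ρ := √(r ^ 2 - s ^ 2 / ‖d‖ ^ 2)
  have hρ₀ : 0 < ρ := Real.sqrt_pos.2 hρ
  have hρ_sq : ρ ^ 2 = r ^ 2 - s ^ 2 / ‖d‖ ^ 2 := Real.sq_sqrt hρ.le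
  -- `η` has `⟪η, d⟫ = -s` and `‖η‖ = r`; `u₁` and `u₂` solve the stationarity
  -- condition `u₁ • η + c + u₂ • d = 0`.
  refine ⟨‖e‖ / ρ, (‖e‖ / ρ * s - ⟪c, d⟫) / ‖d‖ ^ 2, -(s / ‖d‖ ^ 2) • d - (ρ / ‖e‖) • e,
    div_pos he₀ hρ₀, ?_,
    K.sub_mem (K.smul_mem _ hd) (K.smul_mem _ (K.sub_mem hc (K.smul_mem _ hd))), ?_, ?_, ?_⟩
  · refine div_nonneg (sub_nonneg.2 ?_) (by positivity)
    rw [div_mul_eq_mul_div, le_div_iff₀ hρ₀]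
    rcases le_or_gt ⟪c, d⟫ 0 with hκ | hκ
    · nlinarith [mul_nonneg he₀.le hs]
    refine (pow_le_pow_iff_left₀ (by positivity) (by positivity) two_ne_zero).1 ?_
    have : (r * ⟪c, d⟫) ^ 2 < (s * ‖c‖) ^ 2 := pow_lt_pow_left₀ h (by positivity) two_ne_zero
    rw [mul_pow, mul_pow, hρ_sq, show ‖e‖ ^ 2 = ‖c‖ ^ 2 - ⟪c, d⟫ ^ 2 / ‖d‖ ^ 2 by
      rw [hc_sq]; ring]
    field_simp
    nlinarith
  · refine le_of_eq ((sq_eq_sq₀ (norm_nonneg _) hr.le).1 ?_)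
    rw [norm_sub_sq_real, real_inner_smul_left, real_inner_smul_right, real_inner_comm, hed,
      norm_smul, norm_smul, mul_pow, mul_pow, Real.norm_eq_abs, Real.norm_eq_abs, sq_abs, sq_abs]
    field_simp
    rw [hρ_sq]
    field_simp
    ring
  · rw [inner_sub_left, real_inner_smul_left, real_inner_smul_left, hed,
      real_inner_self_eq_norm_sq]
    field_simp
    simp
  · rw [ballHalfspaceDual, norm_add_sq_real, real_inner_smul_right, norm_smul, mul_pow,
      Real.norm_eq_abs, sq_abs, hc_sq, show r ^ 2 = ρ ^ 2 + s ^ 2 / ‖d‖ ^ 2 by rw [hρ_sq]; ring,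
      inner_sub_left, real_inner_smul_left, real_inner_smul_left, hec, real_inner_comm]
    field_simp
    ring

theorem exists_eq_ballHalfspaceDual {K : Submodule ℝ F} {c d : F} {r s : ℝ}
    (hc : c ∈ K) (hd : d ∈ K) (hs : 0 ≤ s) (hsr : s < r * ‖d‖)
    (hcd : -(‖c‖ * ‖d‖) < ⟪c, d⟫) :
    ∃ u₁ u₂ η, 0 < u₁ ∧ 0 ≤ u₂ ∧ η ∈ K ∧ ‖η‖ ≤ r ∧ ⟪η, d⟫ ≤ -s ∧
      ⟪η, c⟫ = ballHalfspaceDual c d r s u₁ u₂ := by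
  rcases le_or_gt (s * ‖c‖) (r * ⟪c, d⟫) with h | h
  · refine exists_eq_ballHalfspaceDual_of_le hc (by rintro rfl; simp at hcd) ?_ h
    exact pos_of_mul_pos_left (hs.trans_lt hsr) (norm_nonneg d)
  · exact exists_eq_ballHalfspaceDual_of_lt hc hd hs hsr hcd h

lemma inner_starProjection_of_mem {K : Submodule ℝ F} [K.HasOrthogonalProjection] {η : F}
    (hη : η ∈ K) (y : F) : ⟪η, K.starProjection y⟫ = ⟪η, y⟫ := by
  rw [← K.inner_starProjection_left_eq_right, K.starProjection_eq_self_iff.2 hη]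

lemma lt_mul_norm_starProjection {K : Submodule ℝ F} [K.HasOrthogonalProjection]
    {θ₀ θ₁ xs : F} {r s β : ℝ} (hθ₀ : θ₀ ∈ K) (hβ : β + s = ⟪θ₀, xs⟫) (hθ₁ : θ₁ ∈ K)
    (hθ₁r : ‖θ₁ - θ₀‖ < r) (hθ₁β : ⟪θ₁, xs⟫ ≤ β) (hxs : K.starProjection xs ≠ 0) :
    s < r * ‖K.starProjection xs‖ := by
  have h := real_inner_le_norm (θ₀ - θ₁) (K.starProjection xs)
  rw [inner_starProjection_of_mem (K.sub_mem hθ₀ hθ₁), inner_sub_left, norm_sub_rev] at h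
  nlinarith [mul_lt_mul_of_pos_right hθ₁r (norm_pos_iff.2 hxs)]

theorem exists_isLeast_inner_image (K : Submodule ℝ F) [K.HasOrthogonalProjection]
    {θ₀ θ₁ x xs : F} {r s β : ℝ} (hθ₀ : θ₀ ∈ K) (hβ : β + s = ⟪θ₀, xs⟫) (hs : 0 ≤ s)
    (hθ₁ : θ₁ ∈ K) (hθ₁r : ‖θ₁ - θ₀‖ < r) (hθ₁β : ⟪θ₁, xs⟫ ≤ β) (hxs : K.starProjection xs ≠ 0)
    (hcos : -(‖K.starProjection x‖ * ‖K.starProjection xs‖) <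
      ⟪K.starProjection x, K.starProjection xs⟫) :
    ∃ u₁ u₂, 0 < u₁ ∧ 0 ≤ u₂ ∧
      (∀ v₁ v₂, 0 < v₁ → 0 ≤ v₂ →
        ballHalfspaceDual (K.starProjection x) (K.starProjection xs) r s v₁ v₂ ≤
          ballHalfspaceDual (K.starProjection x) (K.starProjection xs) r s u₁ u₂) ∧
      IsLeast ((fun θ => ⟪θ, x⟫) '' {θ | ‖θ - θ₀‖ ≤ r ∧ θ ∈ K ∧ ⟪θ, xs⟫ ≤ β})
        (⟪θ₀, x⟫ +
          ballHalfspaceDual (K.starProjection x) (K.starProjection xs) r s u₁ u₂) := by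
  obtain ⟨u₁, u₂, η, hu₁, hu₂, hηK, hηr, hηd, hηc⟩ := exists_eq_ballHalfspaceDual
    (K.starProjection_apply_mem x) (K.starProjection_apply_mem xs) hs
    (lt_mul_norm_starProjection hθ₀ hβ hθ₁ hθ₁r hθ₁β hxs) hcos
  have hweak : ∀ v₁ v₂, 0 < v₁ → 0 ≤ v₂ → ∀ θ ∈ K, ‖θ - θ₀‖ ≤ r → ⟪θ, xs⟫ ≤ β →
      ⟪θ₀, x⟫ + ballHalfspaceDual (K.starProjection x) (K.starProjection xs) r s v₁ v₂ ≤
        ⟪θ, x⟫ := by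
    intro v₁ v₂ hv₁ hv₂ θ hθ hθr hθβ
    have hθ' := K.sub_mem hθ hθ₀
    have := ballHalfspaceDual_le_inner (c := K.starProjection x) (d := K.starProjection xs)
      (s := s) hv₁ hv₂ hθr (by rw [inner_starProjection_of_mem hθ', inner_sub_left]; linarith)
    rw [inner_starProjection_of_mem hθ', inner_sub_left] at this
    linarith
  have hmem : θ₀ + η ∈ {θ | ‖θ - θ₀‖ ≤ r ∧ θ ∈ K ∧ ⟪θ, xs⟫ ≤ β} := by
    refine ⟨by simpa using hηr, K.add_mem hθ₀ hηK, ?_⟩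
    rw [inner_add_left, ← inner_starProjection_of_mem hηK]
    linarith
  have hval : ⟪θ₀ + η, x⟫ = ⟪θ₀, x⟫ + ballHalfspaceDual (K.starProjection x)
      (K.starProjection xs) r s u₁ u₂ := by
    rw [inner_add_left, ← inner_starProjection_of_mem hηK, hηc]
  refine ⟨u₁, u₂, hu₁, hu₂, fun v₁ v₂ hv₁ hv₂ => ?_, ⟨θ₀ + η, hmem, hval⟩, ?_⟩
  · have := hweak v₁ v₂ hv₁ hv₂ _ hmem.2.1 hmem.1 hmem.2.2
    rw [hval] at this
    linarith
  · rintro _ ⟨θ, ⟨hθr, hθ, hθβ⟩, rfl⟩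
    exact hweak u₁ u₂ hu₁ hu₂ θ hθ hθr hθβ

end BallHalfspace

lemma sign_mul_self_eq_abs (x : ℝ) : Real.sign x * x = |x| := by
  rcases lt_trichotomy x 0 with hx | rfl | hx
  · rw [Real.sign_of_neg hx, abs_of_neg hx]; ring
  · simp
  · rw [Real.sign_of_pos hx, abs_of_pos hx]; ring

section Coordinates

variable {ι : Type*} [Fintype ι]

lemma sum_mul_eq_inner_toLp (x y : ι → ℝ) : ∑ i, x i * y i = ⟪toLp 2 x, toLp 2 y⟫ := by
  simp [EuclideanSpace.inner_toLp_toLp, dotProduct, mul_comm]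

lemma sum_sq_eq_norm_toLp_sq (x : ι → ℝ) : ∑ i, x i ^ 2 = ‖toLp 2 x‖ ^ 2 := by
  simp [EuclideanSpace.real_norm_sq_eq]

lemma sqrt_sum_sq_eq_norm_toLp (x : ι → ℝ) : √(∑ i, x i ^ 2) = ‖toLp 2 x‖ := by
  rw [sum_sq_eq_norm_toLp_sq, Real.sqrt_sq (norm_nonneg _)]

lemma toLp_mem_orthogonal_singleton_iff (x b : ι → ℝ) :
    toLp 2 x ∈ (ℝ ∙ toLp 2 b)ᗮ ↔ ∑ i, x i * b i = 0 := by
  rw [Submodule.mem_orthogonal_singleton_iff_inner_left, sum_mul_eq_inner_toLp]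

lemma image_sum_mul_eq_image_inner {r : ℝ} (hr : 0 ≤ r) (θ₀ b x y : ι → ℝ) (β : ℝ) :
    (fun θ : ι → ℝ => ∑ i, θ i * y i) ''
        {θ | ∑ i, (θ i - θ₀ i) ^ 2 ≤ r ^ 2 ∧ ∑ i, θ i * b i = 0 ∧ ∑ i, θ i * x i ≤ β} =
      (fun θ => ⟪θ, toLp 2 y⟫) ''
        {θ | ‖θ - toLp 2 θ₀‖ ≤ r ∧ θ ∈ (ℝ ∙ toLp 2 b)ᗮ ∧ ⟪θ, toLp 2 x⟫ ≤ β} := by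
  have hobj : (fun θ : ι → ℝ => ∑ i, θ i * y i) = (fun θ => ⟪θ, toLp 2 y⟫) ∘ toLp 2 :=
    funext fun θ => sum_mul_eq_inner_toLp θ y
  have hA : {θ | ∑ i, (θ i - θ₀ i) ^ 2 ≤ r ^ 2 ∧ ∑ i, θ i * b i = 0 ∧ ∑ i, θ i * x i ≤ β} =
      toLp 2 ⁻¹' {θ | ‖θ - toLp 2 θ₀‖ ≤ r ∧ θ ∈ (ℝ ∙ toLp 2 b)ᗮ ∧ ⟪θ, toLp 2 x⟫ ≤ β} := by
    ext θ
    rw [Set.mem_preimage, Set.mem_ofPred_eq, Set.mem_ofPred_eq, toLp_mem_orthogonal_singleton_iff,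
      ← sum_mul_eq_inner_toLp, ← WithLp.toLp_sub, ← sq_le_sq₀ (norm_nonneg _) hr,
      ← sum_sq_eq_norm_toLp_sq]
    rfl
  rw [hobj, Set.image_comp, hA, Set.image_preimage_eq _ (WithLp.toLp_surjective 2)]

lemma sum_sq_add_mul_eq_ballHalfspaceDual (c d : ι → ℝ) (a r s u₁ u₂ : ℝ) :
    -(1 / (2 * u₁)) * ∑ i, (c i + u₂ * d i) ^ 2 + u₂ * s + a - 1 / 2 * u₁ * r ^ 2 =
      a + ballHalfspaceDual (toLp 2 c) (toLp 2 d) r s u₁ u₂ := by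
  rw [ballHalfspaceDual, ← WithLp.toLp_smul, ← WithLp.toLp_add, ← sum_sq_eq_norm_toLp_sq]
  simp only [Pi.add_apply, Pi.smul_apply, smul_eq_mul]
  ring

end Coordinates

lemma toLp_Pb (m : ℕ) (b v : Fin m → ℝ) :
    toLp 2 (Pb m b v) = (ℝ ∙ toLp 2 b)ᗮ.starProjection (toLp 2 v) := by
  rw [Submodule.starProjection_orthogonal, sub_apply, Submodule.starProjection_singleton]
  ext i
  simp [Pb, sum_mul_eq_inner_toLp, sum_sq_eq_norm_toLp_sq, real_inner_comm]

lemma Pb_const_mul (m : ℕ) (b v : Fin m → ℝ) (a : ℝ) :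
    Pb m b (fun i => a * v i) = fun i => a * Pb m b v i := by
  funext i
  simp only [Pb, mul_assoc, ← Finset.mul_sum]
  ring

theorem exists_isLeast_sum_mul_image {m : ℕ} {b θ₀ θ₁ x xs : Fin m → ℝ} {r s β : ℝ}
    (hr : 0 ≤ r) (hθ₀ : ∑ i, θ₀ i * b i = 0) (hβ : β + s = ∑ i, θ₀ i * xs i) (hs : 0 ≤ s)
    (hθ₁ : ∑ i, θ₁ i * b i = 0) (hθ₁r : ∑ i, (θ₁ i - θ₀ i) ^ 2 < r ^ 2)
    (hθ₁β : ∑ i, θ₁ i * xs i ≤ β) (hx : Pb m b x ≠ 0) (hxs : Pb m b xs ≠ 0)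
    (hcos : -1 < (∑ i, Pb m b x i * Pb m b xs i) /
      (√(∑ i, Pb m b x i ^ 2) * √(∑ i, Pb m b xs i ^ 2))) :
    ∃ u₁ u₂, 0 < u₁ ∧ 0 ≤ u₂ ∧
      (∀ v₁ v₂, 0 < v₁ → 0 ≤ v₂ →
        ballHalfspaceDual (toLp 2 (Pb m b x)) (toLp 2 (Pb m b xs)) r s v₁ v₂ ≤
          ballHalfspaceDual (toLp 2 (Pb m b x)) (toLp 2 (Pb m b xs)) r s u₁ u₂) ∧
      IsLeast ((fun θ : Fin m → ℝ => ∑ i, θ i * x i) ''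
          {θ | ∑ i, (θ i - θ₀ i) ^ 2 ≤ r ^ 2 ∧ ∑ i, θ i * b i = 0 ∧ ∑ i, θ i * xs i ≤ β})
        (∑ i, θ₀ i * x i +
          ballHalfspaceDual (toLp 2 (Pb m b x)) (toLp 2 (Pb m b xs)) r s u₁ u₂) := by
  have hx₀ : toLp 2 (Pb m b x) ≠ 0 := by simpa using hx
  have hxs₀ : toLp 2 (Pb m b xs) ≠ 0 := by simpa using hxs
  rw [sum_mul_eq_inner_toLp, sqrt_sum_sq_eq_norm_toLp, sqrt_sum_sq_eq_norm_toLp, lt_div_iff₀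
    (mul_pos (norm_pos_iff.2 hx₀) (norm_pos_iff.2 hxs₀)), neg_one_mul] at hcos
  replace hθ₁r : ‖toLp 2 θ₁ - toLp 2 θ₀‖ ^ 2 < r ^ 2 := by
    rw [← WithLp.toLp_sub, ← sum_sq_eq_norm_toLp_sq]
    exact hθ₁r
  simp only [toLp_Pb] at hxs₀ hcos ⊢
  rw [image_sum_mul_eq_image_inner hr, sum_mul_eq_inner_toLp θ₀ x]
  have h1 := (toLp_mem_orthogonal_singleton_iff _ _).2 hθ₀
  have h2 := (toLp_mem_orthogonal_singleton_iff _ _).2 hθ₁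
  rw [sum_mul_eq_inner_toLp] at hβ hθ₁β
  have h3 := (pow_lt_pow_iff_left₀ (norm_nonneg _) hr two_ne_zero).1 hθ₁r
  exact exists_isLeast_inner_image _ h1 hβ hs h2 h3 hθ₁β hxs₀ hcos

theorem slores_dual_ubp_noncollinear_general
 (m p : ℕ)
    (X : Fin p → Fin m → ℝ) (b : Fin m → ℝ)
    (lam lam₀ : ℝ) (hlam : 0 < lam) (hll : lam < lam₀)
    (θ₀ : Fin m → ℝ)
    (hθ₀ : θ₀ ∈ Feas m p X b lam₀ ∧ ∀ θ ∈ Feas m p X b lam₀, g m θ₀ ≤ g m θ)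
    (r : ℝ)
    (hr : r = Real.sqrt (((m : ℝ) / 2) * (g m (fun i => (lam / lam₀) * θ₀ i) - g m θ₀
      + (1 - lam / lam₀) * ∑ i, gradg m θ₀ i * θ₀ i)))
    (j₀ : Fin p) (hj₀ : |∑ i, θ₀ i * X j₀ i| = (m : ℝ) * lam₀)
    (xstar : Fin m → ℝ)
    (hxstar : xstar = fun i => Real.sign (∑ k, θ₀ k * X j₀ k) * X j₀ i)
    (A : Set (Fin m → ℝ))
    (hA : A = {θ | ∑ i, (θ i - θ₀ i) ^ 2 ≤ r ^ 2 ∧ ∑ i, θ i * b i = 0 ∧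
      ∑ i, θ i * xstar i ≤ (m : ℝ) * lam})
    (hPxs : Pb m b xstar ≠ 0)
    (j : Fin p) (hPj : Pb m b (X j) ≠ 0)
    (ξ : ℝ) (hξ : ξ = 1 ∨ ξ = -1)
    (xbar : Fin m → ℝ) (hxbar : xbar = fun i => -ξ * X j i)
    (gbar : ℝ → ℝ → ℝ)
    (hgbar : gbar = fun u₁ u₂ =>
      -(1 / (2 * u₁)) * ∑ i, (Pb m b xbar i + u₂ * Pb m b xstar i) ^ 2
        + u₂ * ((m : ℝ) * (lam₀ - lam)) + (∑ i, θ₀ i * xbar i) - (1 / 2) * u₁ * r ^ 2)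
    (hcos : -1 < (∑ i, Pb m b xbar i * Pb m b xstar i) /
        (Real.sqrt (∑ i, (Pb m b xbar i) ^ 2) * Real.sqrt (∑ i, (Pb m b xstar i) ^ 2)) ∧
      (∑ i, Pb m b xbar i * Pb m b xstar i) /
        (Real.sqrt (∑ i, (Pb m b xbar i) ^ 2) * Real.sqrt (∑ i, (Pb m b xstar i) ^ 2)) ≤ 1) :
    ∃ u₁ u₂ : ℝ, 0 < u₁ ∧ 0 ≤ u₂ ∧
      (∀ v₁ v₂ : ℝ, 0 < v₁ → 0 ≤ v₂ → gbar v₁ v₂ ≤ gbar u₁ u₂) ∧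
      IsLeast ((fun θ => ∑ i, θ i * xbar i) '' A) (gbar u₁ u₂) := by
  obtain ⟨⟨hθ₀01, -, hθ₀b⟩, -⟩ := hθ₀
  have : NeZero m := ⟨by rintro rfl; exact hPxs (Subsingleton.elim _ _)⟩
  have hlam₀ : 0 < lam₀ := hlam.trans hll
  have hθ₀xs : ∑ i, θ₀ i * xstar i = m * lam₀ := by
    rw [← hj₀, ← sign_mul_self_eq_abs, hxstar, Finset.mul_sum]
    exact Finset.sum_congr rfl fun i _ => by ring
  have hPxbar : Pb m b xbar ≠ 0 := by
    have hξ₀ : -ξ ≠ 0 := by rcases hξ with rfl | rfl <;> norm_num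
    rw [hxbar, Pb_const_mul]
    exact fun h => hPj (funext fun i => (mul_eq_zero.1 (congrFun h i)).resolve_left hξ₀)
  obtain ⟨u₁, u₂, hu₁, hu₂, hmax, hleast⟩ := exists_isLeast_sum_mul_image
    (θ₁ := fun i => lam / lam₀ * θ₀ i) (s := m * (lam₀ - lam)) (β := m * lam)
    (hr ▸ sqrt_nonneg _) hθ₀b
    (by rw [hθ₀xs]; ring) (mul_nonneg m.cast_nonneg (sub_nonneg.2 hll.le))
    (by simp only [mul_assoc, ← Finset.mul_sum, hθ₀b, mul_zero])
    (sum_sq_smul_sub_lt_sq hθ₀01 (div_pos hlam hlam₀) ((div_lt_one hlam₀).2 hll) hr)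
    (le_of_eq (by simp only [mul_assoc, ← Finset.mul_sum, hθ₀xs]; field_simp)) hPxbar hPxs hcos.1
  have hgbar' (v₁ v₂ : ℝ) : gbar v₁ v₂ = ∑ i, θ₀ i * xbar i + ballHalfspaceDual
      (toLp 2 (Pb m b xbar)) (toLp 2 (Pb m b xstar)) r (m * (lam₀ - lam)) v₁ v₂ := by
    rw [hgbar, ← sum_sq_add_mul_eq_ballHalfspaceDual]
  refine ⟨u₁, u₂, hu₁, hu₂, fun v₁ v₂ hv₁ hv₂ => ?_, ?_⟩
  · rw [hgbar', hgbar']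
    exact add_le_add_right (hmax v₁ v₂ hv₁ hv₂) _
  · rwa [hA, hgbar']

/-- Lemma 7(a): if `⟨Px̄, Px̄*⟩/(‖Px̄‖₂‖Px̄*‖₂) ∈ (−1, 1]`, then
`min_{θ ∈ A} ⟨θ, x̄⟩ = max_{u₁ > 0, u₂ ≥ 0} ḡ(u₁, u₂)`, and the maximum is attained
at some `(u₁, u₂)` with `u₁ > 0`, `u₂ ≥ 0`. -/
theorem slores_dual_ubp_noncollinear
 (m p : ℕ) (hm : 1 ≤ m) (hp : 1 ≤ p)
    (X : Fin p → Fin m → ℝ) (b : Fin m → ℝ) (hb : ∀ i, b i = 1 ∨ b i = -1)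
    (hmp : 1 ≤ mPlus m b) (hmm : 1 ≤ mMinus m b) (hlmax : 0 < lamMax m p X b)
    (lam lam₀ : ℝ) (hlam : 0 < lam) (hll : lam < lam₀) (hle : lam₀ ≤ lamMax m p X b)
    (θ₀ : Fin m → ℝ)
    (hθ₀ : θ₀ ∈ Feas m p X b lam₀ ∧ ∀ θ ∈ Feas m p X b lam₀, g m θ₀ ≤ g m θ)
    (r : ℝ)
    (hr : r = Real.sqrt (((m : ℝ) / 2) * (g m (fun i => (lam / lam₀) * θ₀ i) - g m θ₀
      + (1 - lam / lam₀) * ∑ i, gradg m θ₀ i * θ₀ i)))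
    (j₀ : Fin p) (hj₀ : |∑ i, θ₀ i * X j₀ i| = (m : ℝ) * lam₀)
    (xstar : Fin m → ℝ)
    (hxstar : xstar = fun i => Real.sign (∑ k, θ₀ k * X j₀ k) * X j₀ i)
    (A : Set (Fin m → ℝ))
    (hA : A = {θ | ∑ i, (θ i - θ₀ i) ^ 2 ≤ r ^ 2 ∧ ∑ i, θ i * b i = 0 ∧
      ∑ i, θ i * xstar i ≤ (m : ℝ) * lam})
    (hPxs : Pb m b xstar ≠ 0)
    (j : Fin p) (hPj : Pb m b (X j) ≠ 0)
    (ξ : ℝ) (hξ : ξ = 1 ∨ ξ = -1)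
    (xbar : Fin m → ℝ) (hxbar : xbar = fun i => -ξ * X j i)
    (gbar : ℝ → ℝ → ℝ)
    (hgbar : gbar = fun u₁ u₂ =>
      -(1 / (2 * u₁)) * ∑ i, (Pb m b xbar i + u₂ * Pb m b xstar i) ^ 2
        + u₂ * ((m : ℝ) * (lam₀ - lam)) + (∑ i, θ₀ i * xbar i) - (1 / 2) * u₁ * r ^ 2)
    (hcos : -1 < (∑ i, Pb m b xbar i * Pb m b xstar i) /
        (Real.sqrt (∑ i, (Pb m b xbar i) ^ 2) * Real.sqrt (∑ i, (Pb m b xstar i) ^ 2)) ∧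
      (∑ i, Pb m b xbar i * Pb m b xstar i) /
        (Real.sqrt (∑ i, (Pb m b xbar i) ^ 2) * Real.sqrt (∑ i, (Pb m b xstar i) ^ 2)) ≤ 1) :
    ∃ u₁ u₂ : ℝ, 0 < u₁ ∧ 0 ≤ u₂ ∧
      (∀ v₁ v₂ : ℝ, 0 < v₁ → 0 ≤ v₂ → gbar v₁ v₂ ≤ gbar u₁ u₂) ∧
      IsLeast ((fun θ => ∑ i, θ i * xbar i) '' A) (gbar u₁ u₂) :=
  slores_dual_ubp_noncollinear_general m p X b lam lam₀ hlam hll θ₀ hθ₀ r hr j₀ hj₀ xstar hxstar A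
    hA hPxs j hPj ξ hξ xbar hxbar gbar hgbar hcos
end
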